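/- arXiv:1607.08295 — 9 statements merged into one kernel-verified Lean document; each statement's English description precedes it below -/
import Mathlib

section
/- Comparison principle: if v, w : M → ℝ are continuous, v(x) ≤ inf_{y}(λ v(y) + c(y,x) + β) for all x (subsolution), and w(x) ≥ inf_{y}(λ w(y) + c(y,x) + β) for all x (supersolution), then for every x ∈ M, v(x) ≤ inf over sequences (x_{-n})_{n≥0} with x_0 = x of Σ_{n=0}^∞ λⁿ (c(x_{-n-1}, x_{-n}) + β) ≤ w(x). -/
open Filter Topology

/-!
Unrolling the subsolution inequality along any backward path gives
`v x ≤ ∑_{n<N} λⁿ (c(x_{-n-1}, x_{-n}) + β) + λᴺ v(x_{-N})`, and the remainder vanishes because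
`v` is bounded and `λ < 1`. For the supersolution the infimum defining the right-hand side is attained at
every point by compactness, so choosing a minimiser at each step produces one backward path along
which the reverse inequalities hold, and the same telescoping bounds its cost by `w x`.
-/

section DiscountedSum

variable {lam C : ℝ} {a f : ℕ → ℝ}

theorem summable_pow_mul_of_norm_le (hlam0 : 0 ≤ lam) (hlam1 : lam < 1) (hf : ∀ n, ‖f n‖ ≤ C) :
    Summable fun n => lam ^ n * f n :=
  .of_norm_bounded ((summable_geometric_of_lt_one hlam0 hlam1).mul_right C) fun n => by
    rw [norm_mul, norm_pow, Real.norm_of_nonneg hlam0]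
    exact mul_le_mul_of_nonneg_left (hf n) (pow_nonneg hlam0 n)

theorem le_sum_range_pow_mul_add (hlam0 : 0 ≤ lam) (hstep : ∀ n, a n ≤ lam * a (n + 1) + f n)
    (N : ℕ) : a 0 ≤ ∑ n ∈ Finset.range N, lam ^ n * f n + lam ^ N * a N := by
  induction N with
  | zero => simp
  | succ N ih =>
    have hN := mul_le_mul_of_nonneg_left (hstep N) (pow_nonneg hlam0 N)
    rw [Finset.sum_range_succ, pow_succ]
    linarith

theorem le_tsum_pow_mul_of_le_mul_add (hlam0 : 0 ≤ lam) (hlam1 : lam < 1)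
    (ha : ∀ n, ‖a n‖ ≤ C) (hf : Summable fun n => lam ^ n * f n)
    (hstep : ∀ n, a n ≤ lam * a (n + 1) + f n) : a 0 ≤ ∑' n, lam ^ n * f n := by
  have hrem : Tendsto (fun N => lam ^ N * a N) atTop (𝓝 0) :=
    (tendsto_pow_atTop_nhds_zero_of_lt_one hlam0 hlam1).zero_mul_isBoundedUnder_le
      (isBoundedUnder_of ⟨C, ha⟩)
  have hlim := hf.hasSum.tendsto_sum_nat.add hrem
  rw [add_zero] at hlim
  exact ge_of_tendsto' hlim (le_sum_range_pow_mul_add hlam0 hstep)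

theorem tsum_pow_mul_le_of_mul_add_le (hlam0 : 0 ≤ lam) (hlam1 : lam < 1)
    (ha : ∀ n, ‖a n‖ ≤ C) (hf : Summable fun n => lam ^ n * f n)
    (hstep : ∀ n, lam * a (n + 1) + f n ≤ a n) : ∑' n, lam ^ n * f n ≤ a 0 := by
  have hneg := le_tsum_pow_mul_of_le_mul_add (a := -a) (f := -f) hlam0 hlam1
    (by simpa using ha) (by simpa using hf.neg) fun n => by
      simp only [Pi.neg_apply]
      linarith [hstep n]
  simp only [Pi.neg_apply, mul_neg, tsum_neg] at hneg
  linarith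

end DiscountedSum

section DiscountedCost

variable {M : Type*} [TopologicalSpace M] [CompactSpace M] {c : M × M → ℝ} {lam β : ℝ}

/-- `p n` stands for the point `x_{-n}` of the backward path. -/
noncomputable def discountedCost (c : M × M → ℝ) (lam β : ℝ) (p : ℕ → M) : ℝ :=
  ∑' n, lam ^ n * (c (p (n + 1), p n) + β)

theorem summable_discountedCost (hc : Continuous c) (hlam0 : 0 ≤ lam) (hlam1 : lam < 1)
    (p : ℕ → M) : Summable fun n => lam ^ n * (c (p (n + 1), p n) + β) :=
  summable_pow_mul_of_norm_le (C := ‖(⟨c, hc⟩ : C(M × M, ℝ))‖ + ‖β‖) hlam0 hlam1 fun n =>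
    (norm_add_le _ _).trans (by gcongr; exact (⟨c, hc⟩ : C(M × M, ℝ)).norm_coe_le_norm _)

theorem le_discountedCost_of_subsolution (hc : Continuous c) (hlam0 : 0 ≤ lam) (hlam1 : lam < 1)
    {v : C(M, ℝ)} (hv : ∀ x, v x ≤ ⨅ y, lam * v y + c (y, x) + β) (p : ℕ → M) :
    v (p 0) ≤ discountedCost c lam β p := by
  refine le_tsum_pow_mul_of_le_mul_add hlam0 hlam1 (fun n => v.norm_coe_le_norm (p n))
    (summable_discountedCost hc hlam0 hlam1 p) fun n => ?_
  have hbdd : BddBelow (Set.range fun y => lam * v y + c (y, p n) + β) :=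
    (isCompact_range (by fun_prop)).bddBelow
  rw [← add_assoc]
  exact (hv (p n)).trans (ciInf_le hbdd (p (n + 1)))

theorem exists_discountedCost_le_of_supersolution (hc : Continuous c) (hlam0 : 0 ≤ lam)
    (hlam1 : lam < 1) {w : C(M, ℝ)} (hw : ∀ x, ⨅ y, lam * w y + c (y, x) + β ≤ w x) (x : M) :
    ∃ p : ℕ → M, p 0 = x ∧ discountedCost c lam β p ≤ w x := by
  have hmin : ∀ m : M, ∃ y, lam * w y + c (y, m) + β ≤ w m := fun m => by
    have : Nonempty M := ⟨m⟩
    obtain ⟨y, -, hy⟩ := isCompact_univ.exists_isMinOn ⟨m, trivial⟩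
      (f := fun y => lam * w y + c (y, m) + β) (by fun_prop)
    exact ⟨y, (le_ciInf fun z => hy trivial).trans (hw m)⟩
  choose next hnext using hmin
  refine ⟨fun n => next^[n] x, rfl, ?_⟩
  refine tsum_pow_mul_le_of_mul_add_le hlam0 hlam1 (fun n => w.norm_coe_le_norm (next^[n] x))
    (summable_discountedCost hc hlam0 hlam1 fun n => next^[n] x) fun n => ?_
  simp only [Function.iterate_succ_apply', ← add_assoc]
  exact hnext _

end DiscountedCost

theorem discounted_comparison_principle_general
    {M : Type*} [MetricSpace M] [CompactSpace M]
    (c : M × M → ℝ) (hc : Continuous c)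
    (lam : ℝ) (hlam0 : 0 < lam) (hlam1 : lam < 1) (β : ℝ)
    (v w : C(M, ℝ))
    (hv : ∀ x : M, v x ≤ ⨅ y : M, (lam * v y + c (y, x) + β))
    (hw : ∀ x : M, w x ≥ ⨅ y : M, (lam * w y + c (y, x) + β))
    (x : M) :
    v x ≤ (⨅ p : {p : ℕ → M // p 0 = x},
        ∑' n : ℕ, lam ^ n * (c ((p : ℕ → M) (n + 1), (p : ℕ → M) n) + β)) ∧
    (⨅ p : {p : ℕ → M // p 0 = x},
        ∑' n : ℕ, lam ^ n * (c ((p : ℕ → M) (n + 1), (p : ℕ → M) n) + β)) ≤ w x := by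
  have hsub : ∀ p : {p : ℕ → M // p 0 = x}, v x ≤ discountedCost c lam β p := fun p => by
    simpa only [p.2] using le_discountedCost_of_subsolution hc hlam0.le hlam1 hv p.1
  obtain ⟨p, hp0, hpw⟩ := exists_discountedCost_le_of_supersolution hc hlam0.le hlam1 hw x
  have : Nonempty {p : ℕ → M // p 0 = x} := ⟨⟨p, hp0⟩⟩
  exact ⟨le_ciInf hsub, (ciInf_le ⟨v x, Set.forall_mem_range.2 hsub⟩ ⟨p, hp0⟩).trans hpw⟩

/-- Comparison principle for the discounted equation with constant `β`. -/
theorem discounted_comparison_principle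
    {M : Type*} [MetricSpace M] [CompactSpace M] [Nonempty M]
    (c : M × M → ℝ) (hc : Continuous c)
    (lam : ℝ) (hlam0 : 0 < lam) (hlam1 : lam < 1) (β : ℝ)
    (v w : C(M, ℝ))
    (hv : ∀ x : M, v x ≤ ⨅ y : M, (lam * v y + c (y, x) + β))
    (hw : ∀ x : M, w x ≥ ⨅ y : M, (lam * w y + c (y, x) + β))
    (x : M) :
    v x ≤ (⨅ p : {p : ℕ → M // p 0 = x},
        ∑' n : ℕ, lam ^ n * (c ((p : ℕ → M) (n + 1), (p : ℕ → M) n) + β)) ∧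
    (⨅ p : {p : ℕ → M // p 0 = x},
        ∑' n : ℕ, lam ^ n * (c ((p : ℕ → M) (n + 1), (p : ℕ → M) n) + β)) ≤ w x :=
  discounted_comparison_principle_general c hc lam hlam0 hlam1 β v w hv hw x
end

section
/- Equicontinuity: every solution u_λ of u_λ(x) = min_y (λ u_λ(y) + c(y,x) + β) admits the modulus of continuity of c; precisely, if ω is a continuity modulus for c (in its second variable, uniformly in the first), then |u_λ(x) − u_λ(y)| ≤ ω(d(x,y)) for all x, y ∈ M and all λ ∈ (0,1). -/
theorem bdd_range_of_cont {M : Type*} [MetricSpace M] [CompactSpace M] [Nonempty M]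
    {f : M → ℝ} (hf : Continuous f) : BddBelow (Set.range f) :=
  (isCompact_range hf).bddBelow

/-- Equicontinuity: every solution of the discounted equation admits the modulus of
continuity of `c` (in its second variable, uniformly in the first). -/
theorem discounted_solutions_equicontinuous
    {M : Type*} [MetricSpace M] [CompactSpace M] [Nonempty M]
    (c : M × M → ℝ) (hc : Continuous c)
    (ω : ℝ → ℝ) (hω : ∀ z x x' : M, |c (z, x) - c (z, x')| ≤ ω (dist x x'))
    (lam : ℝ) (hlam0 : 0 < lam) (hlam1 : lam < 1) (β : ℝ)
    (u : C(M, ℝ))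
    (hu : ∀ x : M, u x = ⨅ y : M, (lam * u y + c (y, x) + β)) :
    ∀ x y : M, |u x - u y| ≤ ω (dist x y) := by
  have key : ∀ x y : M, u x - u y ≤ ω (dist x y) := by
    intro x y
    have hf : Continuous fun z : M => lam * u z + c (z, y) + β :=
      ((continuous_const.mul u.continuous).add
        (hc.comp (continuous_id.prodMk continuous_const))).add continuous_const
    have hg : Continuous fun z : M => lam * u z + c (z, x) + β :=
      ((continuous_const.mul u.continuous).add
        (hc.comp (continuous_id.prodMk continuous_const))).add continuous_const
    obtain ⟨z, -, hz⟩ := isCompact_univ.exists_isMinOn Set.univ_nonempty hf.continuousOn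
    have huy : u y = lam * u z + c (z, y) + β := by
      rw [hu y]
      exact le_antisymm (ciInf_le (bdd_range_of_cont hf) z)
        (le_ciInf fun w => hz (Set.mem_univ w))
    have hux : u x ≤ lam * u z + c (z, x) + β := by
      rw [hu x]; exact ciInf_le (bdd_range_of_cont hg) z
    have hcbd : c (z, x) - c (z, y) ≤ ω (dist x y) :=
      (abs_le.mp (hω z x y)).2.trans_eq' rfl |>.trans_eq rfl
    calc u x - u y ≤ (lam * u z + c (z, x) + β) - (lam * u z + c (z, y) + β) := by
          rw [huy]; linarith
      _ = c (z, x) - c (z, y) := by ring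
      _ ≤ ω (dist x y) := le_of_abs_le (hω z x y)
  intro x y
  rw [abs_sub_le_iff]
  exact ⟨key x y, by simpa [dist_comm] using key y x⟩
end

section
/- If there exists a continuous u : M → ℝ with u(x) = min_y (u(y) + c(y,x)) + α for all x (a critical solution), then the family (u^α_λ)_{0<λ<1} of solutions to the discounted equations with constant α is uniformly bounded: ‖u^α_λ‖_∞ ≤ ‖u‖_∞ + k for a constant k independent of λ. -/
/-- If the critical equation (with constant `α`) has a continuous solution `u`, then
the family of discounted solutions `u^α_λ`, `0 < λ < 1`, is uniformly bounded by
`‖u‖_∞ + k` for a constant `k` independent of `λ`. -/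
theorem discounted_solutions_equibounded_at_critical_value
    {M : Type*} [MetricSpace M] [CompactSpace M] [Nonempty M]
    (c : M × M → ℝ) (hc : Continuous c) (α : ℝ)
    (u : C(M, ℝ)) (hu : ∀ x : M, u x = (⨅ y : M, (u y + c (y, x))) + α) :
    ∃ k : ℝ, ∀ lam : ℝ, 0 < lam → lam < 1 →
      ∀ v : C(M, ℝ), (∀ x : M, v x = (⨅ y : M, (lam * v y + c (y, x))) + α) →
        ∀ x : M, |v x| ≤ (⨆ z : M, |u z|) + k := by
  refine ⟨⨆ z : M, |u z|, ?_⟩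
  intro lam hl0 hl1 v hv x
  set U := ⨆ z : M, |u z| with hUdef
  have hUb : ∀ z : M, |u z| ≤ U := fun z =>
    le_ciSup ((isCompact_range (continuous_abs.comp u.continuous)).bddAbove) z
  have hU0 : 0 ≤ U := le_trans (abs_nonneg _) (hUb x)
  -- bddBelow facts
  have hcont1 : Continuous fun y : M => lam * v y + c (y, x) := by fun_prop
  have hbdd1 : ∀ z : M, BddBelow (Set.range fun y : M => lam * v y + c (y, z)) := by
    intro z
    exact (isCompact_range (by fun_prop)).bddBelow
  have hbdd2 : ∀ z : M, BddBelow (Set.range fun y : M => u y + c (y, z)) := by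
    intro z
    exact (isCompact_range (by fun_prop)).bddBelow
  -- the sup of |v - u| is attained
  obtain ⟨x₀, -, hx₀⟩ := isCompact_univ.exists_isMaxOn Set.univ_nonempty
    ((continuous_abs.comp (v.continuous.sub u.continuous)).continuousOn)
  set W := |v x₀ - u x₀| with hWdef
  have hW : ∀ z : M, |v z - u z| ≤ W := fun z => hx₀ (Set.mem_univ z)
  have hW0 : 0 ≤ W := abs_nonneg _
  set S := lam * W + (1 - lam) * U with hSdef
  have hS : ∀ y : M, |lam * v y - u y| ≤ S := by
    intro y
    have e : lam * v y - u y = lam * (v y - u y) + (lam - 1) * u y := by ring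
    rw [e]
    calc |lam * (v y - u y) + (lam - 1) * u y|
        ≤ |lam * (v y - u y)| + |(lam - 1) * u y| := abs_add_le _ _
      _ = lam * |v y - u y| + (1 - lam) * |u y| := by
          rw [abs_mul, abs_mul, abs_of_pos hl0,
            abs_of_neg (by linarith : lam - 1 < 0)]; ring
      _ ≤ S := by
          have h1 := hW y; have h2 := hUb y
          have : 0 ≤ 1 - lam := by linarith
          nlinarith
  -- two-sided comparison of the infima at x₀
  have hinf1 : (⨅ y : M, (lam * v y + c (y, x₀))) ≤ (⨅ y : M, (u y + c (y, x₀))) + S := by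
    rw [← sub_le_iff_le_add]
    refine le_ciInf fun y => sub_le_iff_le_add.2 ?_
    have h := ciInf_le (hbdd1 x₀) y
    have h2 : lam * v y - u y ≤ S := (le_abs_self _).trans (hS y)
    linarith
  have hinf2 : (⨅ y : M, (u y + c (y, x₀))) ≤ (⨅ y : M, (lam * v y + c (y, x₀))) + S := by
    rw [← sub_le_iff_le_add]
    refine le_ciInf fun y => sub_le_iff_le_add.2 ?_
    have h := ciInf_le (hbdd2 x₀) y
    have h2 : u y - lam * v y ≤ S := by have := neg_le_of_abs_le (hS y); linarith
    linarith
  have key : W ≤ S := by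
    have e1 := hv x₀
    have e2 := hu x₀
    rw [hWdef]
    rw [abs_le]
    constructor <;> [skip; skip] <;> nlinarith [hinf1, hinf2]
  have hWU : W ≤ U := by nlinarith
  calc |v x| = |u x + (v x - u x)| := by ring_nf
    _ ≤ |u x| + |v x - u x| := abs_add_le _ _
    _ ≤ U + W := add_le_add (hUb x) (hW x)
    _ ≤ U + U := by linarith
end

section
/- If a closed probability measure μ̃ on M × M (i.e. both marginals agree) is a Mather measure, meaning ∫ c dμ̃ = −α where α is the critical value, and u_λ solves the discounted equation u_λ(x) = min_y (λ u_λ(y) + c(y,x) + α), then ∫_M u_λ dμ ≤ 0, where μ is the common marginal of μ̃. -/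
open MeasureTheory

/-- If `μ̃` is a Mather measure (a closed probability measure on `M × M` with
`∫ c dμ̃ = -α`, `α` the critical value) and `u_λ` solves the discounted equation with
constant `α`, then `∫ u_λ dμ ≤ 0` where `μ` is the common marginal of `μ̃`. -/
theorem integral_discounted_solution_nonpos
    {M : Type*} [MetricSpace M] [CompactSpace M] [Nonempty M]
    [MeasurableSpace M] [BorelSpace M]
    (c : M × M → ℝ) (hc : Continuous c) (α : ℝ)
    (hcrit : ∃ v : C(M, ℝ), ∀ x : M, v x = (⨅ y : M, (v y + c (y, x))) + α)
    (μt : Measure (M × M)) [IsProbabilityMeasure μt]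
    (hclosed : μt.map Prod.fst = μt.map Prod.snd)
    (hMather : ∫ z, c z ∂μt = -α)
    (lam : ℝ) (hlam0 : 0 < lam) (hlam1 : lam < 1)
    (u : C(M, ℝ))
    (hu : ∀ x : M, u x = ⨅ y : M, (lam * u y + c (y, x) + α)) :
    ∫ x, u x ∂(μt.map Prod.fst) ≤ 0 := by
  -- pointwise inequality: u x ≤ lam * u y + c (y, x) + α
  have hpt : ∀ y x : M, u x ≤ lam * u y + c (y, x) + α := by
    intro y x
    rw [hu x]
    refine ciInf_le ?_ y
    have hcont : Continuous fun y : M => lam * u y + c (y, x) + α :=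
      ((continuous_const.mul u.continuous).add
        (hc.comp (continuous_id.prodMk continuous_const))).add continuous_const
    exact (isCompact_range hcont).bddBelow
  -- integrability facts
  have h1 : Integrable (fun z : M × M => u z.1) μt :=
    (u.continuous.comp continuous_fst).integrable_of_hasCompactSupport (HasCompactSupport.of_compactSpace _)
  have h2 : Integrable (fun z : M × M => u z.2) μt :=
    (u.continuous.comp continuous_snd).integrable_of_hasCompactSupport (HasCompactSupport.of_compactSpace _)
  have h3 : Integrable c μt := hc.integrable_of_hasCompactSupport (HasCompactSupport.of_compactSpace _)
  set I := ∫ x, u x ∂(μt.map Prod.fst) with hI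
  have hfst : ∫ z : M × M, u z.1 ∂μt = I := by
    rw [hI, integral_map measurable_fst.aemeasurable
      (u.continuous.aestronglyMeasurable)]
  have hsnd : ∫ z : M × M, u z.2 ∂μt = I := by
    rw [hI, hclosed, integral_map measurable_snd.aemeasurable
      (u.continuous.aestronglyMeasurable)]
  have e1 : ∫ z : M × M, (lam * u z.1 + c z + α) ∂μt
      = (∫ z : M × M, (lam * u z.1 + c z) ∂μt) + α := by
    rw [integral_add (show Integrable (fun z : M × M => lam * u z.1 + c z) μt from (h1.const_mul lam).add h3) (integrable_const α), integral_const]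
    simp
  have e2 : ∫ z : M × M, (lam * u z.1 + c z) ∂μt
      = lam * (∫ z : M × M, u z.1 ∂μt) + ∫ z : M × M, c z ∂μt := by
    rw [integral_add (show Integrable (fun z : M × M => lam * u z.1) μt from h1.const_mul lam) h3, integral_const_mul]
  have key : I ≤ lam * I := by
    calc I = ∫ z : M × M, u z.2 ∂μt := hsnd.symm
    _ ≤ ∫ z : M × M, (lam * u z.1 + c z + α) ∂μt := by
        refine integral_mono h2 (((h1.const_mul lam).add h3).add (integrable_const α)) ?_
        intro z; simpa using hpt z.1 z.2
    _ = lam * I := by rw [e1, e2, hfst, hMather]; ring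
  nlinarith
end

section
/- Any weak-* accumulation point, as λ → 1⁻, of the discounted occupation measures μ̃^λ_{x̄^λ} (associated to arbitrary backward sequences x̄^λ) is a closed measure: its two marginals on M coincide. -/
open MeasureTheory Filter Topology

/-- The discounted occupation measure `μ̃^λ_{x̄} = (1-λ) ∑ λⁿ δ_{(x_{-n-1}, x_{-n})}`. -/
noncomputable def discountedOccupation {M : Type*} [MeasurableSpace M]
    (lam : ℝ) (p : ℕ → M) : Measure (M × M) :=
  Measure.sum fun n : ℕ =>
    (ENNReal.ofReal ((1 - lam) * lam ^ n)) • Measure.dirac (p (n + 1), p n)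

/-! Against `μ̃^λ`, the coboundary `f y - f x` of a bounded continuous `f` integrates to
`(1 - λ) ∑ λⁿ (f x₋ₙ - f x₋ₙ₋₁)`. Shifting the index once (Abel summation) rewrites the series
as `f x₀ - (1 - λ) ∑ λⁿ f x₋ₙ₋₁`, of size at most `2 ‖f‖`, so the integral is `O(1 - λ)` and
vanishes for every accumulation point as `λ → 1`. A finite Borel measure is determined by its
integrals of bounded continuous functions, so the two marginals agree. -/

section GeometricSeries

variable {r C : ℝ} {a : ℕ → ℝ}

lemma summable_pow_mul_of_abs_le (hr0 : 0 ≤ r) (hr1 : r < 1) (ha : ∀ n, |a n| ≤ C) :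
    Summable fun n ↦ r ^ n * a n :=
  .of_norm_bounded ((summable_geometric_of_lt_one hr0 hr1).mul_right C) fun n ↦ by
    rw [norm_mul, norm_pow, Real.norm_of_nonneg hr0, Real.norm_eq_abs]
    exact mul_le_mul_of_nonneg_left (ha n) (pow_nonneg hr0 n)

lemma abs_tsum_pow_mul_le (hr0 : 0 ≤ r) (hr1 : r < 1) (ha : ∀ n, |a n| ≤ C) :
    |∑' n, r ^ n * a n| ≤ (1 - r)⁻¹ * C := by
  have hbound : Summable fun n ↦ r ^ n * C := (summable_geometric_of_lt_one hr0 hr1).mul_right C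
  calc |∑' n, r ^ n * a n| ≤ ∑' n, |r ^ n * a n| :=
        norm_tsum_le_tsum_norm (summable_pow_mul_of_abs_le hr0 hr1 ha).norm
    _ ≤ ∑' n, r ^ n * C := by
        refine Summable.tsum_le_tsum (fun n ↦ ?_) (summable_pow_mul_of_abs_le hr0 hr1 ha).abs hbound
        rw [abs_mul, abs_of_nonneg (pow_nonneg hr0 n)]
        exact mul_le_mul_of_nonneg_left (ha n) (pow_nonneg hr0 n)
    _ = (1 - r)⁻¹ * C := by rw [tsum_mul_right, tsum_geometric_of_lt_one hr0 hr1]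

lemma tsum_pow_mul_sub_succ (hr0 : 0 ≤ r) (hr1 : r < 1) (ha : ∀ n, |a n| ≤ C) :
    ∑' n, r ^ n * (a n - a (n + 1)) = a 0 - (1 - r) * ∑' n, r ^ n * a (n + 1) := by
  have hs := summable_pow_mul_of_abs_le hr0 hr1 ha
  have hs' := summable_pow_mul_of_abs_le hr0 hr1 (a := fun n ↦ a (n + 1)) fun n ↦ ha (n + 1)
  have hshift : ∑' n, r ^ n * a n = a 0 + r * ∑' n, r ^ n * a (n + 1) := by
    rw [hs.tsum_eq_zero_add, ← tsum_mul_left]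
    simp only [pow_zero, one_mul, pow_succ', mul_assoc]
  simp only [mul_sub]
  rw [hs.tsum_sub hs', hshift]
  ring

lemma abs_tsum_pow_mul_sub_succ_le (hr0 : 0 ≤ r) (hr1 : r < 1) (ha : ∀ n, |a n| ≤ C) :
    |∑' n, r ^ n * (a n - a (n + 1))| ≤ 2 * C := by
  have htail := abs_tsum_pow_mul_le hr0 hr1 (a := fun n ↦ a (n + 1)) fun n ↦ ha (n + 1)
  have hr : 0 < 1 - r := by linarith
  rw [tsum_pow_mul_sub_succ hr0 hr1 ha]
  calc |a 0 - (1 - r) * ∑' n, r ^ n * a (n + 1)|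
      ≤ |a 0| + (1 - r) * |∑' n, r ^ n * a (n + 1)| :=
        (abs_sub _ _).trans_eq (by rw [abs_mul, abs_of_pos hr])
    _ ≤ C + (1 - r) * ((1 - r)⁻¹ * C) := by gcongr; exact ha 0
    _ = 2 * C := by field_simp; ring

end GeometricSeries

open BoundedContinuousFunction

section DiscountedOccupation

variable {M : Type*} [MeasurableSpace M] {lam : ℝ}

lemma isProbabilityMeasure_discountedOccupation (h0 : 0 ≤ lam) (h1 : lam < 1) (p : ℕ → M) :
    IsProbabilityMeasure (discountedOccupation lam p) := by
  have hw : ∀ n : ℕ, 0 ≤ (1 - lam) * lam ^ n := fun n ↦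
    mul_nonneg (by linarith) (pow_nonneg h0 n)
  constructor
  simp only [discountedOccupation, Measure.sum_apply _ MeasurableSet.univ, Measure.smul_apply,
    measure_univ, smul_eq_mul, mul_one]
  rw [← ENNReal.ofReal_tsum_of_nonneg hw ((summable_geometric_of_lt_one h0 h1).mul_left _),
    tsum_mul_left, tsum_geometric_of_lt_one h0 h1, mul_inv_cancel₀ (by linarith),
    ENNReal.ofReal_one]

lemma integral_discountedOccupation [TopologicalSpace M] [OpensMeasurableSpace (M × M)]
    (h0 : 0 ≤ lam) (h1 : lam < 1) (p : ℕ → M) (g : M × M →ᵇ ℝ) :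
    ∫ z, g z ∂discountedOccupation lam p = (1 - lam) * ∑' n, lam ^ n * g (p (n + 1), p n) := by
  have := isProbabilityMeasure_discountedOccupation h0 h1 p
  have hg : Integrable g (discountedOccupation lam p) := g.integrable _
  rw [discountedOccupation] at hg ⊢
  rw [integral_sum_measure hg, ← tsum_mul_left]
  refine tsum_congr fun n ↦ ?_
  rw [integral_smul_measure, integral_dirac' _ _ g.continuous.measurable.stronglyMeasurable,
    ENNReal.toReal_ofReal (mul_nonneg (by linarith) (pow_nonneg h0 n)), smul_eq_mul, mul_assoc]

end DiscountedOccupation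

namespace BoundedContinuousFunction

variable {X : Type*} [TopologicalSpace X]

def coboundary (f : X →ᵇ ℝ) : X × X →ᵇ ℝ :=
  f.compContinuous ContinuousMap.snd - f.compContinuous ContinuousMap.fst

@[simp]
lemma coboundary_apply (f : X →ᵇ ℝ) (z : X × X) : f.coboundary z = f z.2 - f z.1 := rfl

end BoundedContinuousFunction

lemma abs_integral_coboundary_discountedOccupation_le {M : Type*} [TopologicalSpace M]
    [MeasurableSpace M] [OpensMeasurableSpace (M × M)] {lam : ℝ} (h0 : 0 ≤ lam) (h1 : lam < 1)
    (p : ℕ → M) (f : M →ᵇ ℝ) :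
    |∫ z, f.coboundary z ∂discountedOccupation lam p| ≤ 2 * (1 - lam) * ‖f‖ := by
  rw [integral_discountedOccupation h0 h1, abs_mul, abs_of_nonneg (by linarith : 0 ≤ 1 - lam),
    mul_comm 2, mul_assoc]
  exact mul_le_mul_of_nonneg_left
    (abs_tsum_pow_mul_sub_succ_le h0 h1 (a := fun n ↦ f (p n)) fun n ↦ f.norm_coe_le_norm _)
    (by linarith)

lemma map_fst_eq_map_snd_of_integral_coboundary_eq_zero {X : Type*} [TopologicalSpace X]
    [MeasurableSpace X] [HasOuterApproxClosed X] [BorelSpace X] [OpensMeasurableSpace (X × X)]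
    {μ : Measure (X × X)} [IsFiniteMeasure μ] (h : ∀ f : X →ᵇ ℝ, ∫ z, f.coboundary z ∂μ = 0) :
    μ.map Prod.fst = μ.map Prod.snd := by
  refine ext_of_forall_integral_eq_of_IsFiniteMeasure fun f ↦ ?_
  rw [integral_map measurable_fst.aemeasurable f.continuous.aestronglyMeasurable,
    integral_map measurable_snd.aemeasurable f.continuous.aestronglyMeasurable,
    eq_comm, ← sub_eq_zero, ← h f]
  exact (integral_sub ((f.compContinuous ContinuousMap.snd).integrable μ)
    ((f.compContinuous ContinuousMap.fst).integrable μ)).symm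

theorem accumulation_of_discountedOccupation_isClosed_general
    {M : Type*} [MetricSpace M] [CompactSpace M]
    [MeasurableSpace M] [BorelSpace M]
    (p : ℝ → ℕ → M)
    (μt : Measure (M × M)) [IsProbabilityMeasure μt]
    (lams : ℕ → ℝ) (h0 : ∀ i, 0 < lams i) (h1 : ∀ i, lams i < 1)
    (hlims : Tendsto lams atTop (𝓝 1))
    (hconv : ∀ f : C(M × M, ℝ),
      Tendsto (fun i => ∫ z, f z ∂(discountedOccupation (lams i) (p (lams i))))
        atTop (𝓝 (∫ z, f z ∂μt))) :
    μt.map Prod.fst = μt.map Prod.snd := by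
  refine map_fst_eq_map_snd_of_integral_coboundary_eq_zero fun f ↦ ?_
  have hbound : Tendsto (fun i ↦ 2 * (1 - lams i) * ‖f‖) atTop (𝓝 0) := by
    simpa using (((tendsto_const_nhds (x := (1 : ℝ))).sub hlims).const_mul 2).mul_const ‖f‖
  exact tendsto_nhds_unique (hconv f.coboundary.toContinuousMap) <| squeeze_zero_norm
    (fun i ↦ abs_integral_coboundary_discountedOccupation_le (h0 i).le (h1 i) _ f) hbound

/-- Any weak-* accumulation point, as `λ → 1⁻`, of discounted occupation measures
associated to arbitrary backward sequences is a closed measure: its two marginals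
coincide. -/
theorem accumulation_of_discountedOccupation_isClosed
    {M : Type*} [MetricSpace M] [CompactSpace M] [Nonempty M]
    [MeasurableSpace M] [BorelSpace M]
    (p : ℝ → ℕ → M)
    (μt : Measure (M × M)) [IsProbabilityMeasure μt]
    (lams : ℕ → ℝ) (h0 : ∀ i, 0 < lams i) (h1 : ∀ i, lams i < 1)
    (hlims : Tendsto lams atTop (𝓝 1))
    (hconv : ∀ f : C(M × M, ℝ),
      Tendsto (fun i => ∫ z, f z ∂(discountedOccupation (lams i) (p (lams i))))
        atTop (𝓝 (∫ z, f z ∂μt))) :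
    μt.map Prod.fst = μt.map Prod.snd :=
  accumulation_of_discountedOccupation_isClosed_general p μt lams h0 h1 hlims hconv
end

section
/- Any uniform limit u of a subsequence u_{λ_i} (λ_i → 1⁻) of the discounted solutions satisfies, for every continuous subsolution w of the critical equation, u(x) ≥ w(x) − sup_{μ ∈ M₀} ∫_M w dμ for all x ∈ M, where M₀ is the set of projected Mather measures. -/
/-!
For `λ < 1` and a point `x`, follow a backward path `x = ξ₀, ξ₁, …` along which the discounted
equation is attained, `u_λ(ξₖ) = λ u_λ(ξₖ₊₁) + c(ξₖ₊₁, ξₖ)`, and give weight `(1 - λ) λᵏ` to its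
step `(ξₖ₊₁, ξₖ)`. The resulting probability measure `μ_λ` on `M × M` has
`∫ c dμ_λ = (1 - λ) u_λ(x)`, and its second marginal is `(1 - λ) δₓ` plus `λ` times its first one.
A subsolution satisfies `w(b) - w(a) ≤ c(a, b)`, so integrating against `μ_λ` gives
`w(x) - ∫ w d(pr₁)_* μ_λ ≤ u_λ(x)`. A weak limit of the `μ_{λᵢ}` is closed and has `∫ c = 0`,
and the inequality passes to the limit.
-/

open MeasureTheory Filter Topology
open scoped BoundedContinuousFunction

theorem le_add_of_le_iInf_add {X : Type*} [TopologicalSpace X] [CompactSpace X]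
    {c : X × X → ℝ} (hc : Continuous c) {w : X → ℝ} (hwc : Continuous w)
    (hw : ∀ x, w x ≤ ⨅ y, (w y + c (y, x))) (x y : X) : w x ≤ w y + c (y, x) :=
  (hw x).trans (ciInf_le (isCompact_range (by fun_prop)).bddBelow y)

theorem exists_calibrated_path {X : Type*} [TopologicalSpace X] [CompactSpace X]
    {c : X × X → ℝ} (hc : Continuous c) {lam : ℝ} {v : X → ℝ} (hv : Continuous v)
    (hfix : ∀ x, v x = ⨅ y, (lam * v y + c (y, x))) (x : X) :
    ∃ ξ : ℕ → X, ξ 0 = x ∧ ∀ k, v (ξ k) = lam * v (ξ (k + 1)) + c (ξ (k + 1), ξ k) := by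
  have : Nonempty X := ⟨x⟩
  have hstep (z : X) : ∃ y, v z = lam * v y + c (y, z) := by
    have hcont : Continuous fun y => lam * v y + c (y, z) := by fun_prop
    obtain ⟨y, hy⟩ := (isCompact_range hcont).sInf_mem (Set.range_nonempty _)
    exact ⟨y, (hfix z).trans hy.symm⟩
  choose next hnext using hstep
  refine ⟨fun k => next^[k] x, rfl, fun k => ?_⟩
  dsimp only
  rw [Function.iterate_succ_apply']
  exact hnext _

section Integrals

variable {Y : Type*} [TopologicalSpace Y] [MeasurableSpace Y]

theorem Continuous.integrable_of_compactSpace [CompactSpace Y] [OpensMeasurableSpace Y]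
    {μ : Measure Y} [IsFiniteMeasure μ] {f : Y → ℝ} (hf : Continuous f) : Integrable f μ :=
  (BoundedContinuousFunction.mkOfCompact ⟨f, hf⟩).integrable μ

theorem tendsto_integral_of_tendsto_probabilityMeasure [CompactSpace Y] [OpensMeasurableSpace Y]
    {ι : Type*} {L : Filter ι} {μs : ι → ProbabilityMeasure Y} {ν : ProbabilityMeasure Y}
    (h : Tendsto μs L (𝓝 ν)) {f : Y → ℝ} (hf : Continuous f) :
    Tendsto (fun i => ∫ y, f y ∂(μs i : Measure Y)) L (𝓝 (∫ y, f y ∂(ν : Measure Y))) :=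
  ProbabilityMeasure.tendsto_iff_forall_integral_tendsto.1 h
    (BoundedContinuousFunction.mkOfCompact ⟨f, hf⟩)

theorem map_fst_eq_map_snd_of_integral_eq [HasOuterApproxClosed Y] [BorelSpace Y]
    {ν : Measure (Y × Y)} [IsFiniteMeasure ν] (h : ∀ f : Y →ᵇ ℝ, ∫ z, f z.1 ∂ν = ∫ z, f z.2 ∂ν) :
    ν.map Prod.fst = ν.map Prod.snd := by
  refine ext_of_forall_integral_eq_of_IsFiniteMeasure fun f => ?_
  rw [integral_map measurable_fst.aemeasurable f.continuous.aestronglyMeasurable,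
    integral_map measurable_snd.aemeasurable f.continuous.aestronglyMeasurable]
  exact h f

theorem ContinuousMap.integral_le_norm [CompactSpace Y] [OpensMeasurableSpace Y]
    (μ : Measure Y) [IsProbabilityMeasure μ] (w : C(Y, ℝ)) : ∫ y, w y ∂μ ≤ ‖w‖ :=
  (le_abs_self _).trans <|
    ((BoundedContinuousFunction.mkOfCompact w).norm_integral_le_norm μ).trans_eq
      (BoundedContinuousFunction.norm_mkOfCompact w)

end Integrals

section DiscountedPath

variable {X : Type*} [MeasurableSpace X]

noncomputable def discountedPathMeasure (lam : ℝ) (ξ : ℕ → X) : Measure (X × X) :=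
  Measure.sum fun k => ENNReal.ofReal ((1 - lam) * lam ^ k) • Measure.dirac (ξ (k + 1), ξ k)

variable {lam : ℝ} {ξ : ℕ → X}

theorem isProbabilityMeasure_discountedPathMeasure (h0 : 0 ≤ lam) (h1 : lam < 1) (ξ : ℕ → X) :
    IsProbabilityMeasure (discountedPathMeasure lam ξ) := by
  have hsum : HasSum (fun k => (1 - lam) * lam ^ k) 1 := by
    simpa [mul_inv_cancel₀ (sub_ne_zero.2 h1.ne')] using
      (hasSum_geometric_of_lt_one h0 h1).mul_left (1 - lam)
  have hnonneg (k : ℕ) : 0 ≤ (1 - lam) * lam ^ k := by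
    have := sub_nonneg.2 h1.le; positivity
  constructor
  rw [discountedPathMeasure, Measure.sum_apply _ MeasurableSet.univ]
  simp only [Measure.smul_apply, measure_univ, smul_eq_mul, mul_one]
  rw [← ENNReal.ofReal_tsum_of_nonneg hnonneg hsum.summable, hsum.tsum_eq, ENNReal.ofReal_one]

variable [TopologicalSpace X] [CompactSpace X] [OpensMeasurableSpace (X × X)]

theorem hasSum_integral_discountedPathMeasure (h0 : 0 ≤ lam) (h1 : lam < 1)
    {f : X × X → ℝ} (hf : Continuous f) :
    HasSum (fun k => (1 - lam) * lam ^ k * f (ξ (k + 1), ξ k))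
      (∫ z, f z ∂discountedPathMeasure lam ξ) := by
  have := isProbabilityMeasure_discountedPathMeasure h0 h1 ξ
  refine (hasSum_integral_measure
    (hf.integrable_of_compactSpace (μ := discountedPathMeasure lam ξ))).congr_fun fun k => ?_
  have := sub_nonneg.2 h1.le
  rw [integral_smul_measure, integral_dirac' _ _ hf.stronglyMeasurable,
    ENNReal.toReal_ofReal (by positivity), smul_eq_mul]

theorem integral_snd_sub_integral_fst_discountedPathMeasure (h0 : 0 ≤ lam) (h1 : lam < 1)
    {g : X → ℝ} (hg : Continuous g) :
    ∫ z, g z.2 ∂discountedPathMeasure lam ξ - ∫ z, g z.1 ∂discountedPathMeasure lam ξ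
      = (1 - lam) * (g (ξ 0) - ∫ z, g z.1 ∂discountedPathMeasure lam ξ) := by
  have hsnd := (hasSum_nat_add_iff' 1).2 (hasSum_integral_discountedPathMeasure (ξ := ξ) h0 h1
    (f := fun z => g z.2) (by fun_prop))
  have hfst : HasSum (fun k => (1 - lam) * lam ^ (k + 1) * g (ξ (k + 1)))
      (lam * ∫ z, g z.1 ∂discountedPathMeasure lam ξ) := by
    refine ((hasSum_integral_discountedPathMeasure h0 h1
      (f := fun z => g z.1) (by fun_prop)).mul_left lam).congr_fun fun k => ?_
    ring
  have hshift := hsnd.unique hfst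
  simp only [Finset.range_one, Finset.sum_singleton, pow_zero, mul_one] at hshift
  linear_combination hshift

theorem integral_discountedPathMeasure_of_calibrated (h0 : 0 ≤ lam) (h1 : lam < 1)
    {c : X × X → ℝ} (hc : Continuous c) {v : X → ℝ} (hv : Continuous v)
    (hξ : ∀ k, v (ξ k) = lam * v (ξ (k + 1)) + c (ξ (k + 1), ξ k)) :
    ∫ z, c z ∂discountedPathMeasure lam ξ = (1 - lam) * v (ξ 0) := by
  have := isProbabilityMeasure_discountedPathMeasure h0 h1 ξ
  have hv₁ : Continuous fun z : X × X => v z.1 := by fun_prop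
  have hv₂ : Continuous fun z : X × X => v z.2 := by fun_prop
  have hcost : ∫ z, c z ∂discountedPathMeasure lam ξ
      = ∫ z, (v z.2 - lam * v z.1) ∂discountedPathMeasure lam ξ :=
    (hasSum_integral_discountedPathMeasure h0 h1 hc).unique <| by
      refine (hasSum_integral_discountedPathMeasure h0 h1
        (f := fun z => v z.2 - lam * v z.1) (by fun_prop)).congr_fun fun k => ?_
      rw [hξ k]
      ring
  rw [hcost, integral_sub hv₂.integrable_of_compactSpace
    (hv₁.const_mul lam).integrable_of_compactSpace, integral_const_mul]
  linear_combination integral_snd_sub_integral_fst_discountedPathMeasure (ξ := ξ) h0 h1 hv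

theorem sub_integral_fst_le_of_calibrated (h0 : 0 ≤ lam) (h1 : lam < 1)
    {c : X × X → ℝ} (hc : Continuous c) {v : X → ℝ} (hv : Continuous v)
    (hξ : ∀ k, v (ξ k) = lam * v (ξ (k + 1)) + c (ξ (k + 1), ξ k))
    {w : X → ℝ} (hw : Continuous w) (hwc : ∀ x y, w x ≤ w y + c (y, x)) :
    w (ξ 0) - ∫ z, w z.1 ∂discountedPathMeasure lam ξ ≤ v (ξ 0) := by
  have := isProbabilityMeasure_discountedPathMeasure h0 h1 ξ
  have hw₁ : Continuous fun z : X × X => w z.1 := by fun_prop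
  have hw₂ : Continuous fun z : X × X => w z.2 := by fun_prop
  have hle : ∫ z, w z.2 ∂discountedPathMeasure lam ξ - ∫ z, w z.1 ∂discountedPathMeasure lam ξ
      ≤ ∫ z, c z ∂discountedPathMeasure lam ξ := by
    rw [← integral_sub hw₂.integrable_of_compactSpace hw₁.integrable_of_compactSpace]
    exact integral_mono (hw₂.sub hw₁).integrable_of_compactSpace hc.integrable_of_compactSpace
      fun z => by linarith [hwc z.2 z.1]
  rw [integral_snd_sub_integral_fst_discountedPathMeasure h0 h1 hw,
    integral_discountedPathMeasure_of_calibrated h0 h1 hc hv hξ] at hle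
  exact le_of_mul_le_mul_left hle (sub_pos.2 h1)

end DiscountedPath

section DiscountedLimit

variable {X : Type*} [TopologicalSpace X] [CompactSpace X] [MeasurableSpace X]
  [OpensMeasurableSpace (X × X)] {ι : Type*} {L : Filter ι} {lam : ι → ℝ} {ξ : ι → ℕ → X} {x : X}
  {P : ι → ProbabilityMeasure (X × X)} {ν : ProbabilityMeasure (X × X)}

theorem map_fst_eq_map_snd_of_tendsto_discountedPathMeasure [HasOuterApproxClosed X]
    [BorelSpace X] [L.NeBot] (h0 : ∀ i, 0 ≤ lam i) (h1 : ∀ i, lam i < 1)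
    (hlam : Tendsto lam L (𝓝 1)) (hξ0 : ∀ i, ξ i 0 = x)
    (hP : ∀ i, (P i : Measure (X × X)) = discountedPathMeasure (lam i) (ξ i))
    (hPν : Tendsto P L (𝓝 ν)) :
    (ν : Measure (X × X)).map Prod.fst = (ν : Measure (X × X)).map Prod.snd := by
  refine map_fst_eq_map_snd_of_integral_eq fun f => ?_
  have hf₁ := tendsto_integral_of_tendsto_probabilityMeasure hPν (f := fun z => f z.1)
    (by fun_prop)
  have hf₂ := tendsto_integral_of_tendsto_probabilityMeasure hPν (f := fun z => f z.2)
    (by fun_prop)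
  have hdiff : Tendsto (fun i => ∫ z, f z.2 ∂(P i : Measure (X × X))
      - ∫ z, f z.1 ∂(P i : Measure (X × X))) L (𝓝 0) := by
    rw [← zero_mul (f x - ∫ z, f z.1 ∂(ν : Measure (X × X))), ← sub_self (1 : ℝ)]
    refine (((tendsto_const_nhds (x := (1 : ℝ))).sub hlam).mul
      (tendsto_const_nhds.sub hf₁)).congr fun i => ?_
    rw [hP i, ← hξ0 i]
    exact (integral_snd_sub_integral_fst_discountedPathMeasure (h0 i) (h1 i) f.continuous).symm
  linarith [tendsto_nhds_unique (hf₂.sub hf₁) (by simpa using hdiff)]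

variable {c : X × X → ℝ} {v : ι → X → ℝ} {a : ℝ}

theorem integral_eq_zero_of_tendsto_discountedPathMeasure [L.NeBot] (h0 : ∀ i, 0 ≤ lam i)
    (h1 : ∀ i, lam i < 1) (hlam : Tendsto lam L (𝓝 1)) (hξ0 : ∀ i, ξ i 0 = x)
    (hP : ∀ i, (P i : Measure (X × X)) = discountedPathMeasure (lam i) (ξ i))
    (hPν : Tendsto P L (𝓝 ν)) (hc : Continuous c) (hv : ∀ i, Continuous (v i))
    (hξ : ∀ i k, v i (ξ i k) = lam i * v i (ξ i (k + 1)) + c (ξ i (k + 1), ξ i k))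
    (hva : Tendsto (fun i => v i x) L (𝓝 a)) :
    ∫ z, c z ∂(ν : Measure (X × X)) = 0 := by
  refine tendsto_nhds_unique (tendsto_integral_of_tendsto_probabilityMeasure hPν hc) ?_
  rw [← zero_mul a, ← sub_self (1 : ℝ)]
  refine (((tendsto_const_nhds (x := (1 : ℝ))).sub hlam).mul hva).congr fun i => ?_
  rw [hP i, ← hξ0 i]
  exact (integral_discountedPathMeasure_of_calibrated (h0 i) (h1 i) hc (hv i) (hξ i)).symm

theorem sub_integral_fst_le_of_tendsto_discountedPathMeasure [L.NeBot] (h0 : ∀ i, 0 ≤ lam i)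
    (h1 : ∀ i, lam i < 1) (hξ0 : ∀ i, ξ i 0 = x)
    (hP : ∀ i, (P i : Measure (X × X)) = discountedPathMeasure (lam i) (ξ i))
    (hPν : Tendsto P L (𝓝 ν)) (hc : Continuous c) (hv : ∀ i, Continuous (v i))
    (hξ : ∀ i k, v i (ξ i k) = lam i * v i (ξ i (k + 1)) + c (ξ i (k + 1), ξ i k))
    (hva : Tendsto (fun i => v i x) L (𝓝 a))
    {w : X → ℝ} (hw : Continuous w) (hwc : ∀ x y, w x ≤ w y + c (y, x)) :
    w x - ∫ z, w z.1 ∂(ν : Measure (X × X)) ≤ a := by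
  refine le_of_tendsto_of_tendsto' (tendsto_const_nhds.sub
    (tendsto_integral_of_tendsto_probabilityMeasure hPν (f := fun z => w z.1) (by fun_prop)))
    hva fun i => ?_
  rw [hP i, ← hξ0 i]
  exact sub_integral_fst_le_of_calibrated (h0 i) (h1 i) hc (hv i) (hξ i) hw hwc

end DiscountedLimit

theorem limit_ge_subsolution_minus_sup_integral_general
    {M : Type*} [MetricSpace M] [CompactSpace M]
    [MeasurableSpace M] [BorelSpace M]
    (c : M × M → ℝ) (hc : Continuous c)
    (us : ℝ → C(M, ℝ))
    (hus : ∀ lam : ℝ, 0 < lam → lam < 1 →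
      ∀ x : M, us lam x = ⨅ y : M, (lam * us lam y + c (y, x)))
    (lams : ℕ → ℝ) (h0 : ∀ i, 0 < lams i) (h1 : ∀ i, lams i < 1)
    (hlims : Tendsto lams atTop (𝓝 1))
    (u : C(M, ℝ))
    (hconv : TendstoUniformly (fun i x => us (lams i) x) u atTop)
    (w : C(M, ℝ)) (hw : ∀ x : M, w x ≤ ⨅ y : M, (w y + c (y, x))) :
    ∀ x : M, u x ≥ w x - sSup {r : ℝ | ∃ μt : Measure (M × M),
      IsProbabilityMeasure μt ∧ μt.map Prod.fst = μt.map Prod.snd ∧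
      (∫ z, c z ∂μt = 0) ∧ r = ∫ y, w y ∂(μt.map Prod.fst)} := by
  intro x
  have h0' i := (h0 i).le
  have hcont i := (us (lams i)).continuous
  choose ξ hξ0 hξ using fun i => exists_calibrated_path hc (hcont i) (hus _ (h0 i) (h1 i)) x
  let P (i : ℕ) : ProbabilityMeasure (M × M) :=
    ⟨_, isProbabilityMeasure_discountedPathMeasure (h0' i) (h1 i) (ξ i)⟩
  -- an ultrafilter limit plays the role of a weakly convergent subsequence
  let L := Ultrafilter.of (atTop : Filter ℕ)
  have hL : (L : Filter ℕ) ≤ atTop := Ultrafilter.of_le _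
  obtain ⟨ν, -, hν⟩ := isCompact_univ.ultrafilter_le_nhds (L.map P) (by simp)
  have hlamL := hlims.mono_left hL
  have huL := (hconv.tendsto_at x).mono_left hL
  have hclosed := map_fst_eq_map_snd_of_tendsto_discountedPathMeasure h0' h1 hlamL hξ0
    (fun _ => rfl) hν
  have hcost := integral_eq_zero_of_tendsto_discountedPathMeasure h0' h1 hlamL hξ0
    (fun _ => rfl) hν hc hcont hξ huL
  have hle := sub_integral_fst_le_of_tendsto_discountedPathMeasure h0' h1 hξ0 (fun _ => rfl) hν
    hc hcont hξ huL w.continuous (le_add_of_le_iInf_add hc w.continuous hw)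
  rw [← integral_map measurable_fst.aemeasurable w.continuous.aestronglyMeasurable] at hle
  refine le_trans (sub_le_sub_left (le_csSup ?_ ?_) (w x)) hle
  · refine ⟨‖w‖, ?_⟩
    rintro _ ⟨μt, hμt, -, -, rfl⟩
    have := Measure.isProbabilityMeasure_map (μ := μt) measurable_fst.aemeasurable
    exact ContinuousMap.integral_le_norm _ w
  · exact ⟨ν, ν.2, hclosed, hcost, rfl⟩

/-- Any uniform limit `u` of a subsequence `u_{λ_i}` (`λ_i → 1⁻`) of discounted
solutions satisfies, for every continuous subsolution `w` of the critical equation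
(critical value `0`), `u ≥ w - sup_{μ ∈ M₀} ∫ w dμ`, where `M₀` is the set of
projected Mather measures. -/
theorem limit_ge_subsolution_minus_sup_integral
    {M : Type*} [MetricSpace M] [CompactSpace M] [Nonempty M]
    [MeasurableSpace M] [BorelSpace M]
    (c : M × M → ℝ) (hc : Continuous c)
    (hcrit : ∃ v : C(M, ℝ), ∀ x : M, v x = ⨅ y : M, (v y + c (y, x)))
    (us : ℝ → C(M, ℝ))
    (hus : ∀ lam : ℝ, 0 < lam → lam < 1 →
      ∀ x : M, us lam x = ⨅ y : M, (lam * us lam y + c (y, x)))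
    (lams : ℕ → ℝ) (h0 : ∀ i, 0 < lams i) (h1 : ∀ i, lams i < 1)
    (hlims : Tendsto lams atTop (𝓝 1))
    (u : C(M, ℝ))
    (hconv : TendstoUniformly (fun i x => us (lams i) x) u atTop)
    (w : C(M, ℝ)) (hw : ∀ x : M, w x ≤ ⨅ y : M, (w y + c (y, x))) :
    ∀ x : M, u x ≥ w x - sSup {r : ℝ | ∃ μt : Measure (M × M),
      IsProbabilityMeasure μt ∧ μt.map Prod.fst = μt.map Prod.snd ∧
      (∫ z, c z ∂μt = 0) ∧ r = ∫ y, w y ∂(μt.map Prod.fst)} :=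
  limit_ge_subsolution_minus_sup_integral_general c hc us hus lams h0 h1 hlims u hconv w hw
end

section
/- For every y ∈ M, the function x ↦ h(y,x) is a solution of the critical equation u = T(u), and the function x ↦ −h(x,y) is a continuous subsolution; moreover the family (−h(·,y))_{y∈M} is uniformly bounded. -/
open Filter

/-- The minimal cost over chains of length `n` from `x` to `y`. -/
noncomputable def minChainCost {M : Type*} (c : M × M → ℝ) (n : ℕ) (x y : M) : ℝ :=
  sInf {r : ℝ | ∃ p : ℕ → M, p 0 = x ∧ p n = y ∧
    r = ∑ i ∈ Finset.range n, c (p i, p (i + 1))}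

/-- The Peierls barrier `h(x, y) = liminf_n c_n(x, y)` (critical value `0`). -/
noncomputable def peierls {M : Type*} (c : M × M → ℝ) (x y : M) : ℝ :=
  Filter.liminf (fun n => minChainCost c n x y) Filter.atTop

/-!
A critical solution `v` is a subsolution, so every chain from `x` to `y` costs at least
`v y - v x`; it is also a supersolution, which propagates a bound `c (x, ·) ≤ v + A` through the
recursion `c_{n+1}(x, y) = ⨅ z, c_n(x, z) + c(z, y)`. Hence the `c_n` are uniformly bounded.
Through the same recursion, uniform continuity of `c` makes `(c_n(x, ·))_n` equicontinuous, and
on a compact space `liminf` and `⨅` commute for a bounded equicontinuous sequence: this turns the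
recursion into `h(x, ·) = T h(x, ·)` and makes `h(x, ·)` continuous. Reversing chains exchanges
`c` with `c ∘ Prod.swap` and `h(x, y)` with `h(y, x)`, which yields the statements on `-h(·, y)`.
-/

open Set

section Liminf

variable {ι : Type*} {l : Filter ι} {u w : ι → ℝ} {C : ℝ}

lemma isBoundedUnder_ge_of_abs_le (h : ∀ i, |u i| ≤ C) : l.IsBoundedUnder (· ≥ ·) u :=
  isBoundedUnder_of ⟨-C, fun i => (abs_le.1 (h i)).1⟩

lemma isCoboundedUnder_ge_of_abs_le [l.NeBot] (h : ∀ i, |u i| ≤ C) :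
    l.IsCoboundedUnder (· ≥ ·) u :=
  (isBoundedUnder_of ⟨C, fun i => (abs_le.1 (h i)).2⟩).isCoboundedUnder_ge

lemma abs_liminf_le [l.NeBot] (h : ∀ i, |u i| ≤ C) : |liminf u l| ≤ C :=
  abs_le.2 ⟨le_liminf_of_le (isCoboundedUnder_ge_of_abs_le h)
      (Eventually.of_forall fun i => (abs_le.1 (h i)).1),
    liminf_le_of_frequently_le (Frequently.of_forall fun i => (abs_le.1 (h i)).2)
      (isBoundedUnder_ge_of_abs_le h)⟩

lemma liminf_le_liminf_add_of_le_add [l.NeBot] {ε : ℝ} (hu : ∀ i, |u i| ≤ C)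
    (hw : ∀ i, |w i| ≤ C) (h : ∀ i, u i ≤ w i + ε) : liminf u l ≤ liminf w l + ε := by
  have hwε : ∀ i, |w i + ε| ≤ C + |ε| := fun i => (abs_add_le _ _).trans (by linarith [hw i])
  calc liminf u l ≤ liminf (fun i => w i + ε) l :=
        liminf_le_liminf (Eventually.of_forall h) (isBoundedUnder_ge_of_abs_le hu)
          (isCoboundedUnder_ge_of_abs_le hwε)
    _ = liminf w l + ε :=
        liminf_add_const l w ε (isCoboundedUnder_ge_of_abs_le hw) (isBoundedUnder_ge_of_abs_le hw)

end Liminf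

section Equicontinuous

variable {X : Type*} [TopologicalSpace X] {f : ℕ → X → ℝ} {C : ℝ}

lemma Equicontinuous.add_continuous {ι E : Type*} [SeminormedAddCommGroup E] {F : ι → X → E}
    {g : X → E} (hF : Equicontinuous F) (hg : Continuous g) :
    Equicontinuous fun i x => F i x + g x := by
  intro x₀
  rw [Metric.equicontinuousAt_iff_right]
  intro ε hε
  filter_upwards [Metric.equicontinuousAt_iff_right.1 (hF x₀) (ε / 2) (half_pos hε),
    Metric.tendsto_nhds.1 (hg.tendsto x₀) (ε / 2) (half_pos hε)] with x hFx hgx i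
  calc dist (F i x₀ + g x₀) (F i x + g x) ≤ dist (F i x₀) (F i x) + dist (g x₀) (g x) :=
        dist_add_add_le _ _ _ _
    _ < ε / 2 + ε / 2 := add_lt_add (hFx i) (by rwa [dist_comm])
    _ = ε := add_halves ε

lemma Equicontinuous.continuous_liminf (hf : Equicontinuous f) (hC : ∀ n x, |f n x| ≤ C) :
    Continuous fun x => liminf (fun n => f n x) atTop := by
  refine continuous_iff_continuousAt.2 fun x₀ => Metric.tendsto_nhds.2 fun ε hε => ?_
  filter_upwards [Metric.equicontinuousAt_iff_right.1 (hf x₀) (ε / 2) (half_pos hε)] with x hx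
  have hx' : ∀ n, f n x ≤ f n x₀ + ε / 2 ∧ f n x₀ ≤ f n x + ε / 2 := fun n => by
    have := hx n
    rw [Real.dist_eq, abs_sub_lt_iff] at this
    constructor <;> linarith
  have h₁ := liminf_le_liminf_add_of_le_add (l := atTop) (hC · x) (hC · x₀) (hx' · |>.1)
  have h₂ := liminf_le_liminf_add_of_le_add (l := atTop) (hC · x₀) (hC · x) (hx' · |>.2)
  rw [Real.dist_eq, abs_sub_lt_iff]
  constructor <;> linarith

lemma Equicontinuous.exists_frequently_lt [CompactSpace X] (hf : Equicontinuous f) {a ε : ℝ}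
    (hε : 0 < ε) (h : ∃ᶠ n in atTop, ∃ x, f n x < a) :
    ∃ x, ∃ᶠ n in atTop, f n x < a + ε := by
  obtain ⟨φ, hφ, hφa⟩ := extraction_of_frequently_atTop h
  choose z hz using hφa
  obtain ⟨x, hx⟩ := exists_clusterPt_of_compactSpace (map z atTop)
  have hnear := Metric.equicontinuousAt_iff_right.1 (hf x) ε hε
  refine ⟨x, hφ.tendsto_atTop.frequently ?_⟩
  refine (mapClusterPt_iff_frequently.1 hx _ hnear).mono fun j hj => ?_
  have := hj (φ j)
  rw [Real.dist_eq, abs_sub_lt_iff] at this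
  linarith [hz j]

lemma Equicontinuous.liminf_ciInf_eq [CompactSpace X] [Nonempty X] (hf : Equicontinuous f)
    (hC : ∀ n x, |f n x| ≤ C) :
    liminf (fun n => ⨅ x, f n x) atTop = ⨅ x, liminf (fun n => f n x) atTop := by
  have hbdd : ∀ n, BddBelow (range (f n)) := fun n =>
    ⟨-C, by rintro _ ⟨x, rfl⟩; exact (abs_le.1 (hC n x)).1⟩
  have hinf : ∀ n, |⨅ x, f n x| ≤ C := fun n =>
    abs_le.2 ⟨le_ciInf fun x => (abs_le.1 (hC n x)).1,
      (ciInf_le (hbdd n) (Classical.arbitrary X)).trans (abs_le.1 (hC n _)).2⟩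
  have hlim : BddBelow (range fun x => liminf (fun n => f n x) atTop) :=
    ⟨-C, by rintro _ ⟨x, rfl⟩; exact (abs_le.1 (abs_liminf_le (hC · x))).1⟩
  refine le_antisymm (le_ciInf fun x => ?_) (le_of_forall_pos_le_add fun ε hε => ?_)
  · simpa using liminf_le_liminf_add_of_le_add (ε := 0) hinf (hC · x)
      fun n => by simpa using ciInf_le (hbdd n) x
  · have hfreq : ∃ᶠ n in atTop, ∃ x, f n x < liminf (fun n => ⨅ x, f n x) atTop + ε / 2 :=
      (frequently_lt_of_liminf_lt (isCoboundedUnder_ge_of_abs_le hinf)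
        (lt_add_of_pos_right _ (half_pos hε))).mono fun n hn => exists_lt_of_ciInf_lt hn
    obtain ⟨x, hx⟩ := hf.exists_frequently_lt (half_pos hε) hfreq
    calc ⨅ x, liminf (fun n => f n x) atTop ≤ liminf (fun n => f n x) atTop := ciInf_le hlim x
      _ ≤ _ := liminf_le_of_frequently_le (hx.mono fun n hn => by linarith)
          (isBoundedUnder_ge_of_abs_le (hC · x))

end Equicontinuous

section Chains

variable {M : Type*} {c : M × M → ℝ} {v : M → ℝ} {C : ℝ} {n : ℕ} {x y z : M}

def chainCosts (c : M × M → ℝ) (n : ℕ) (x y : M) : Set ℝ :=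
  {r : ℝ | ∃ p : ℕ → M, p 0 = x ∧ p n = y ∧
    r = ∑ i ∈ Finset.range n, c (p i, p (i + 1))}

lemma minChainCost_eq_sInf : minChainCost c n x y = sInf (chainCosts c n x y) := rfl

lemma chainCosts_nonempty (hn : n ≠ 0) : (chainCosts c n x y).Nonempty := by
  classical
  exact ⟨_, fun i => if i = 0 then x else y, if_pos rfl, if_neg hn, rfl⟩

lemma sub_le_of_mem_chainCosts (hv : ∀ z x, v x ≤ v z + c (z, x)) {r : ℝ}
    (hr : r ∈ chainCosts c n x y) : v y - v x ≤ r := by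
  obtain ⟨p, rfl, rfl, rfl⟩ := hr
  rw [← Finset.sum_range_sub (fun i => v (p i))]
  exact Finset.sum_le_sum fun i _ => sub_le_iff_le_add'.2 (hv _ _)

lemma bddBelow_chainCosts (hv : ∀ z x, v x ≤ v z + c (z, x)) : BddBelow (chainCosts c n x y) :=
  ⟨_, fun _ => sub_le_of_mem_chainCosts hv⟩

lemma sub_le_minChainCost (hv : ∀ z x, v x ≤ v z + c (z, x)) (hn : n ≠ 0) :
    v y - v x ≤ minChainCost c n x y :=
  le_csInf (chainCosts_nonempty hn) fun _ => sub_le_of_mem_chainCosts hv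

lemma minChainCost_one : minChainCost c 1 x y = c (x, y) := by
  classical
  have : chainCosts c 1 x y = {c (x, y)} := by
    refine eq_singleton_iff_unique_mem.2
      ⟨⟨fun i => if i = 0 then x else y, rfl, rfl, by simp⟩, ?_⟩
    rintro _ ⟨p, rfl, rfl, rfl⟩
    simp
  rw [minChainCost_eq_sInf, this, csInf_singleton]

lemma minChainCost_succ_le (hv : ∀ z x, v x ≤ v z + c (z, x)) (hn : n ≠ 0) :
    minChainCost c (n + 1) x y ≤ minChainCost c n x z + c (z, y) := by
  classical
  rw [← sub_le_iff_le_add]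
  refine le_csInf (chainCosts_nonempty hn) ?_
  rintro _ ⟨p, rfl, rfl, rfl⟩
  refine sub_le_iff_le_add.2 (csInf_le (bddBelow_chainCosts hv)
    ⟨Function.update p (n + 1) y, by simp, by simp, ?_⟩)
  rw [Finset.sum_range_succ, Function.update_self, Function.update_of_ne n.succ_ne_self.symm]
  congr 1
  refine Finset.sum_congr rfl fun i hi => ?_
  have := Finset.mem_range.1 hi
  rw [Function.update_of_ne (by omega), Function.update_of_ne (by omega)]

lemma minChainCost_succ_eq_ciInf (hv : ∀ z x, v x ≤ v z + c (z, x)) (hn : n ≠ 0) :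
    minChainCost c (n + 1) x y = ⨅ z, (minChainCost c n x z + c (z, y)) := by
  have : Nonempty M := ⟨x⟩
  have hbdd : BddBelow (range fun z => minChainCost c n x z + c (z, y)) := by
    refine ⟨v y - v x, ?_⟩
    rintro _ ⟨z, rfl⟩
    linarith [sub_le_minChainCost (x := x) (y := z) hv hn, hv z y]
  refine le_antisymm (le_ciInf fun z => minChainCost_succ_le hv hn)
    (le_csInf (chainCosts_nonempty n.succ_ne_zero) ?_)
  rintro _ ⟨p, rfl, rfl, rfl⟩
  rw [Finset.sum_range_succ]
  exact (ciInf_le hbdd (p n)).trans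
    (add_le_add_left (csInf_le (bddBelow_chainCosts hv) ⟨p, rfl, rfl, rfl⟩) _)

lemma minChainCost_le_of_le_add (hv : ∀ z x, v x ≤ v z + c (z, x))
    (hsup : ∀ y, ⨅ z, (v z + c (z, y)) ≤ v y) {A : ℝ} (hA : ∀ y, c (x, y) ≤ v y + A) (n : ℕ)
    (y : M) : minChainCost c (n + 1) x y ≤ v y + A := by
  induction n generalizing y with
  | zero => rw [zero_add, minChainCost_one]; exact hA y
  | succ n ih =>
    have : Nonempty M := ⟨x⟩
    refine sub_le_iff_le_add.1 (le_trans (le_ciInf fun z => ?_) (hsup y))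
    linarith [minChainCost_succ_le (x := x) (y := y) (z := z) hv n.succ_ne_zero, ih z]

lemma abs_minChainCost_le (hv : ∀ z x, v x ≤ v z + c (z, x))
    (hsup : ∀ y, ⨅ z, (v z + c (z, y)) ≤ v y) {K V : ℝ} (hK : ∀ p, |c p| ≤ K)
    (hV : ∀ x, |v x| ≤ V) (n : ℕ) (x y : M) : |minChainCost c (n + 1) x y| ≤ K + 2 * V := by
  have hupper := minChainCost_le_of_le_add hv hsup (A := K + V)
    (fun y => by linarith [(abs_le.1 (hK (x, y))).2, (abs_le.1 (hV y)).1]) n y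
  have hlower := sub_le_minChainCost (x := x) (y := y) hv n.succ_ne_zero
  have hK₀ : 0 ≤ K := (abs_nonneg _).trans (hK (x, x))
  rw [abs_le]
  constructor <;> linarith [abs_le.1 (hV x), abs_le.1 (hV y)]

lemma chainCosts_swap_subset : chainCosts (c ∘ Prod.swap) n y x ⊆ chainCosts c n x y := by
  rintro _ ⟨p, rfl, rfl, rfl⟩
  refine ⟨fun i => p (n - i), by simp, by simp, ?_⟩
  rw [← Finset.sum_range_reflect]
  refine Finset.sum_congr rfl fun i hi => ?_
  have := Finset.mem_range.1 hi
  simp only [Function.comp_apply, Prod.swap_prod_mk]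
  congr 3 <;> omega

lemma minChainCost_swap : minChainCost (c ∘ Prod.swap) n y x = minChainCost c n x y := by
  refine congrArg sInf (chainCosts_swap_subset.antisymm ?_)
  simpa [Function.comp_assoc] using
    chainCosts_swap_subset (c := c ∘ Prod.swap) (x := y) (y := x)

lemma peierls_eq_liminf_add (k : ℕ) (x y : M) :
    peierls c x y = liminf (fun n => minChainCost c (n + k) x y) atTop :=
  (liminf_nat_add _ k).symm

lemma peierls_swap : peierls (c ∘ Prod.swap) y x = peierls c x y := by
  simp only [peierls, minChainCost_swap]

lemma abs_peierls_le (hC : ∀ n x y, |minChainCost c (n + 1) x y| ≤ C) (x y : M) :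
    |peierls c x y| ≤ C := by
  rw [peierls_eq_liminf_add 1]
  exact abs_liminf_le (hC · x y)

end Chains

section Peierls

variable {M : Type*} [MetricSpace M] [CompactSpace M] {c : M × M → ℝ} {v : M → ℝ} {C : ℝ}

lemma uniformEquicontinuous_minChainCost (hc : Continuous c) (hv : ∀ z x, v x ≤ v z + c (z, x))
    (x : M) : UniformEquicontinuous fun n z => minChainCost c (n + 2) x z := by
  rw [Metric.uniformEquicontinuous_iff]
  intro ε hε
  obtain ⟨δ, hδ, hcδ⟩ := Metric.uniformContinuous_iff.1
    (CompactSpace.uniformContinuous_of_continuous hc) (ε / 2) (half_pos hε)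
  have key : ∀ n z z', dist z z' < δ →
      minChainCost c (n + 2) x z ≤ minChainCost c (n + 2) x z' + ε / 2 := by
    intro n z z' hzz'
    have : Nonempty M := ⟨x⟩
    rw [minChainCost_succ_eq_ciInf (y := z') hv n.succ_ne_zero, ← sub_le_iff_le_add]
    refine le_ciInf fun w => sub_le_iff_le_add.2 ?_
    have hw : dist (c (w, z)) (c (w, z')) < ε / 2 := hcδ (by simpa [Prod.dist_eq] using hzz')
    rw [Real.dist_eq, abs_sub_lt_iff] at hw
    linarith [minChainCost_succ_le (x := x) (y := z) (z := w) hv n.succ_ne_zero]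
  refine ⟨δ, hδ, fun z z' hzz' n => ?_⟩
  have h₁ := key n z z' hzz'
  have h₂ := key n z' z (by rwa [dist_comm])
  rw [Real.dist_eq, abs_sub_lt_iff]
  constructor <;> linarith

lemma continuous_peierls (hc : Continuous c) (hv : ∀ z x, v x ≤ v z + c (z, x))
    (hC : ∀ n x y, |minChainCost c (n + 1) x y| ≤ C) (x : M) : Continuous (peierls c x) := by
  convert (uniformEquicontinuous_minChainCost hc hv x).equicontinuous.continuous_liminf
    fun n z => hC (n + 1) x z using 1
  exact funext (peierls_eq_liminf_add 2 x)

lemma peierls_eq_ciInf [Nonempty M] (hc : Continuous c) (hv : ∀ z x, v x ≤ v z + c (z, x))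
    (hC : ∀ n x y, |minChainCost c (n + 1) x y| ≤ C) (x y : M) :
    peierls c x y = ⨅ z, (peierls c x z + c (z, y)) := by
  let K := ‖(⟨c, hc⟩ : C(M × M, ℝ))‖
  have hK : ∀ p, |c p| ≤ K := (⟨c, hc⟩ : C(M × M, ℝ)).norm_coe_le_norm
  have hf := (uniformEquicontinuous_minChainCost hc hv x).equicontinuous.add_continuous
    (by fun_prop : Continuous fun z => c (z, y))
  calc peierls c x y = liminf (fun n => minChainCost c (n + 2 + 1) x y) atTop :=
        peierls_eq_liminf_add 3 x y
    _ = liminf (fun n => ⨅ z, (minChainCost c (n + 2) x z + c (z, y))) atTop := by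
        simp only [minChainCost_succ_eq_ciInf hv (Nat.succ_ne_zero _)]
    _ = ⨅ z, liminf (fun n => minChainCost c (n + 2) x z + c (z, y)) atTop :=
        hf.liminf_ciInf_eq fun n z => (abs_add_le _ _).trans (add_le_add (hC _ _ _) (hK _))
    _ = ⨅ z, (peierls c x z + c (z, y)) := by
        refine iInf_congr fun z => ?_
        rw [liminf_add_const _ _ _ (isCoboundedUnder_ge_of_abs_le fun n => hC (n + 1) x z)
          (isBoundedUnder_ge_of_abs_le fun n => hC (n + 1) x z), ← peierls_eq_liminf_add 2]

lemma peierls_le_add [Nonempty M] (hc : Continuous c) (hv : ∀ z x, v x ≤ v z + c (z, x))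
    (hC : ∀ n x y, |minChainCost c (n + 1) x y| ≤ C) (x y z : M) :
    peierls c x y ≤ peierls c x z + c (z, y) := by
  rw [peierls_eq_ciInf hc hv hC x y]
  exact ciInf_le (isCompact_range ((continuous_peierls hc hv hC x).add
    (by fun_prop))).bddBelow z

end Peierls

/-- For every `y`, `h(y, ·)` is a solution of the critical equation, `-h(·, y)` is a
continuous subsolution, and the family `(-h(·, y))_y` is equibounded. -/
theorem peierls_solution_subsolution_equibounded
    {M : Type*} [MetricSpace M] [CompactSpace M] [Nonempty M]
    (c : M × M → ℝ) (hc : Continuous c)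
    (hcrit : ∃ v : C(M, ℝ), ∀ x : M, v x = ⨅ y : M, (v y + c (y, x))) :
    (∀ y x : M, peierls c y x = ⨅ z : M, (peierls c y z + c (z, x))) ∧
    (∀ y : M, Continuous (fun x : M => -peierls c x y)) ∧
    (∀ y x : M, -peierls c x y ≤ ⨅ z : M, (-peierls c z y + c (z, x))) ∧
    (∃ C : ℝ, ∀ y x : M, |-peierls c x y| ≤ C) := by
  obtain ⟨v, hv⟩ := hcrit
  let K := ‖(⟨c, hc⟩ : C(M × M, ℝ))‖
  have hK : ∀ p, |c p| ≤ K := (⟨c, hc⟩ : C(M × M, ℝ)).norm_coe_le_norm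
  have hsub : ∀ z x, v x ≤ v z + c (z, x) := fun z x =>
    (hv x).trans_le (ciInf_le (isCompact_range (by fun_prop)).bddBelow z)
  have hC := abs_minChainCost_le hsub (fun y => (hv y).ge) hK v.norm_coe_le_norm
  have hc' : Continuous (c ∘ Prod.swap) := hc.comp continuous_swap
  have hsub' : ∀ z x, (-v) x ≤ (-v) z + (c ∘ Prod.swap) (z, x) := fun z x => by
    simp only [ContinuousMap.neg_apply, Function.comp_apply, Prod.swap_prod_mk]
    linarith [hsub x z]
  have hC' : ∀ n x y, |minChainCost (c ∘ Prod.swap) (n + 1) x y| ≤ K + 2 * ‖v‖ :=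
    fun n x y => minChainCost_swap (n := n + 1) ▸ hC n y x
  refine ⟨peierls_eq_ciInf hc hsub hC, fun y => ?_, fun y x => le_ciInf fun z => ?_,
    K + 2 * ‖v‖, fun y x => by rw [abs_neg]; exact abs_peierls_le hC x y⟩
  · exact (continuous_peierls hc' hsub' hC' y).neg.congr fun x => by
      rw [Pi.neg_apply, peierls_swap]
  · have := peierls_le_add hc' hsub' hC' y z x
    simp only [peierls_swap, Function.comp_apply, Prod.swap_prod_mk] at this
    linarith
end

section
/- The support of any projected Mather measure is contained in the projected Aubry set A = { y ∈ M : h(y,y) = 0 }. -/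
/-!
Let `v` be the critical solution and `f (x, y) = v x + c (x, y) - v y ≥ 0` the reduced cost;
on loops `f` and `c` have the same total cost, so `c_n(x, x) ≥ 0`. Since a Mather measure is
closed, `∫ f = ∫ c = 0`, so `f = 0` almost everywhere. Running the Markov chain whose steps
are distributed by the Mather measure, a Poincaré-recurrence count shows that every set of
positive projected measure is revisited along arbitrarily long chains of `f`-free steps. For `x`
in the support, such a chain from a small ball around `x` back to it, with its endpoints moved
to `x`, is a loop at `x` of cost at most `ε` by uniform continuity of `f`. Hence the
nonnegative sequence `c_n(x, x)` is frequently below every `ε > 0` and its liminf vanishes.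
-/

open MeasureTheory Filter Topology

open ProbabilityTheory

lemma Filter.liminf_eq_zero_of_frequently_le {ι : Type*} {l : Filter ι} {u : ι → ℝ}
    (h0 : ∀ i, 0 ≤ u i) (hsmall : ∀ ε > 0, ∃ᶠ i in l, u i ≤ ε) : liminf u l = 0 := by
  refine le_antisymm (le_of_forall_pos_le_add fun ε hε => ?_) ?_
  · rw [zero_add]
    exact liminf_le_of_frequently_le (hsmall ε hε) (isBoundedUnder_of ⟨0, h0⟩)
  · exact le_liminf_of_le (IsCoboundedUnder.of_frequently_le (hsmall 1 one_pos))
      (Eventually.of_forall h0)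

lemma MeasureTheory.Measure.map_prodMap_compProd_comap {α β γ : Type*} [MeasurableSpace α]
    [MeasurableSpace β] [MeasurableSpace γ] (ρ : Measure α) [IsFiniteMeasure ρ] {g : α → γ}
    (hg : Measurable g) (κ : Kernel γ β) [IsMarkovKernel κ] :
    (ρ ⊗ₘ κ.comap g hg).map (Prod.map g id) = ρ.map g ⊗ₘ κ := by
  ext s hs
  rw [Measure.map_apply (hg.prodMap measurable_id) hs,
    Measure.compProd_apply (hg.prodMap measurable_id hs), Measure.compProd_apply hs,
    lintegral_map (Kernel.measurable_kernel_prodMk_left hs) hg]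
  rfl

section ClosedMeasure

variable {M : Type*} [MeasurableSpace M]

lemma measurable_pairAt (i : ℕ) : Measurable (fun ω : ℕ → M => (ω i, ω (i + 1))) :=
  (measurable_pi_apply i).prodMk (measurable_pi_apply (i + 1))

/-- `ρ` is the law of the first `m` steps of the Markov chain with initial law the first marginal
of `μt` and transition kernel the disintegration of `μt`; closedness makes that law stationary. -/
theorem exists_chain_coupling [StandardBorelSpace M] [Nonempty M] (μt : Measure (M × M))
    [IsProbabilityMeasure μt] (hclosed : μt.map Prod.fst = μt.map Prod.snd) (m : ℕ) :
    ∃ ρ : Measure (ℕ → M), IsProbabilityMeasure ρ ∧ ρ.map (fun ω => ω m) = μt.map Prod.fst ∧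
      ∀ i < m, ρ.map (fun ω => (ω i, ω (i + 1))) = μt := by
  induction m with
  | zero =>
    have : IsProbabilityMeasure (μt.map Prod.fst) :=
      Measure.isProbabilityMeasure_map measurable_fst.aemeasurable
    refine ⟨(μt.map Prod.fst).map (fun x _ => x), Measure.isProbabilityMeasure_map (by fun_prop),
      ?_, fun i hi => absurd hi i.not_lt_zero⟩
    rw [Measure.map_map (measurable_pi_apply 0) (by fun_prop)]
    exact Measure.map_id
  | succ m ih =>
    obtain ⟨ρ, hρ, hρm, hρpair⟩ := ih
    set κ := μt.condKernel.comap (fun ω : ℕ → M => ω m) (measurable_pi_apply m)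
    have hext : Measurable (fun p : (ℕ → M) × M => Function.update p.1 (m + 1) p.2) :=
      measurable_update'
    have hfst : (ρ ⊗ₘ κ).map Prod.fst = ρ := Measure.fst_compProd ρ κ
    have hlast : ((ρ ⊗ₘ κ).map (fun p => Function.update p.1 (m + 1) p.2)).map
        (fun ω => (ω m, ω (m + 1))) = μt := by
      rw [Measure.map_map (measurable_pairAt m) hext]
      have : (fun ω : ℕ → M => (ω m, ω (m + 1))) ∘
          (fun p : (ℕ → M) × M => Function.update p.1 (m + 1) p.2) =
          Prod.map (fun ω => ω m) id := by
        funext p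
        simp [Prod.map]
      rw [this, Measure.map_prodMap_compProd_comap, hρm]
      exact μt.disintegrate μt.condKernel
    refine ⟨(ρ ⊗ₘ κ).map (fun p => Function.update p.1 (m + 1) p.2),
      Measure.isProbabilityMeasure_map hext.aemeasurable, ?_, fun i hi => ?_⟩
    · rw [show (fun ω : ℕ → M => ω (m + 1)) = Prod.snd ∘ (fun ω => (ω m, ω (m + 1))) from rfl,
        ← Measure.map_map measurable_snd (measurable_pairAt m), hlast, hclosed]
    rcases Nat.lt_succ_iff_lt_or_eq.mp hi with hi | rfl
    · rw [Measure.map_map (measurable_pairAt i) hext]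
      have : (fun ω : ℕ → M => (ω i, ω (i + 1))) ∘
          (fun p : (ℕ → M) × M => Function.update p.1 (m + 1) p.2) =
          (fun ω => (ω i, ω (i + 1))) ∘ Prod.fst := by
        funext p
        simp [Function.update_of_ne (show i ≠ m + 1 by omega),
          Function.update_of_ne (show i + 1 ≠ m + 1 by omega)]
      rw [this, ← Measure.map_map (measurable_pairAt i) measurable_fst, hfst, hρpair i hi]
    · exact hlast

theorem exists_chain_mem_of_measure_ne_zero [StandardBorelSpace M] [Nonempty M]
    (μt : Measure (M × M)) [IsProbabilityMeasure μt]
    (hclosed : μt.map Prod.fst = μt.map Prod.snd) {S : Set (M × M)} (hS : ∀ᵐ z ∂μt, z ∈ S)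
    {B : Set M} (hB : MeasurableSet B) (hμB : μt.map Prod.fst B ≠ 0) (N : ℕ) :
    ∃ n ≥ N, ∃ q : ℕ → M, q 0 ∈ B ∧ q n ∈ B ∧ ∀ t < n, (q t, q (t + 1)) ∈ S := by
  obtain ⟨K, hK⟩ := ENNReal.exists_nat_mul_gt hμB ENNReal.one_ne_top
  obtain ⟨ρ, hρ, -, hρpair⟩ := exists_chain_coupling μt hclosed (K * N + 1)
  set G := {ω : ℕ → M | ∀ t ∈ Set.Iio (K * N + 1), (ω t, ω (t + 1)) ∈ S}
  have hG : G ∈ ae ρ := by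
    change ∀ᵐ ω ∂ρ, ∀ t ∈ Set.Iio (K * N + 1), (ω t, ω (t + 1)) ∈ S
    rw [eventually_all_finite (Set.finite_Iio _)]
    intro t ht
    refine ae_of_ae_map (measurable_pairAt t).aemeasurable ?_
    rwa [hρpair t ht]
  set E := fun j : ℕ => (fun ω : ℕ → M => ω (j * N)) ⁻¹' B ∩ G
  have hE : ∀ j < K, ρ (E j) = μt.map Prod.fst B := fun j hj => by
    have hjN : j * N < K * N + 1 := Nat.lt_succ_of_le (Nat.mul_le_mul_right N hj.le)
    rw [measure_inter_conull (mem_ae_iff.1 hG), ← Measure.map_apply (measurable_pi_apply _) hB,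
      show (fun ω : ℕ → M => ω (j * N)) = Prod.fst ∘ (fun ω => (ω (j * N), ω (j * N + 1))) from rfl,
      ← Measure.map_map measurable_fst (measurable_pairAt _), hρpair _ hjN]
  have hEm : ∀ j ∈ Finset.range K, NullMeasurableSet (E j) ρ := fun j _ =>
    (hB.preimage (measurable_pi_apply _)).nullMeasurableSet.inter
      (NullMeasurableSet.of_compl (NullMeasurableSet.of_null (mem_ae_iff.1 hG)))
  have hsum : ρ Set.univ < ∑ j ∈ Finset.range K, ρ (E j) := by
    rwa [measure_univ, Finset.sum_congr rfl fun j hj => hE j (Finset.mem_range.1 hj),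
      Finset.sum_const, Finset.card_range, nsmul_eq_mul]
  obtain ⟨i, hi, j, hj, hij, hE⟩ := exists_nonempty_inter_of_measure_univ_lt_sum_measure ρ hEm hsum
  wlog hlt : i < j generalizing i j
  · exact this j hj i hi hij.symm (Set.inter_comm (E i) (E j) ▸ hE) (by omega)
  obtain ⟨ω, ⟨hωi, -⟩, hωj, hωG⟩ := hE
  have hij' : i * N + (j - i) * N = j * N := by rw [← Nat.add_mul, Nat.add_sub_cancel' hlt.le]
  refine ⟨(j - i) * N, Nat.le_mul_of_pos_left N (Nat.sub_pos_of_lt hlt), fun s => ω (i * N + s),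
    hωi, by simpa [hij'] using hωj, fun t ht => hωG _ ?_⟩
  have : j * N ≤ K * N := Nat.mul_le_mul_right N (Finset.mem_range.1 hj).le
  simp only [Set.mem_Iio]
  omega

end ClosedMeasure

section ReducedCost

variable {M : Type*}

def reducedCost (c : M × M → ℝ) (v : M → ℝ) (z : M × M) : ℝ := v z.1 + c z - v z.2

lemma sum_reducedCost (c : M × M → ℝ) (v : M → ℝ) (p : ℕ → M) (n : ℕ) :
    ∑ i ∈ Finset.range n, reducedCost c v (p i, p (i + 1)) =
      ∑ i ∈ Finset.range n, c (p i, p (i + 1)) + v (p 0) - v (p n) := by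
  have hsplit : ∑ i ∈ Finset.range n, reducedCost c v (p i, p (i + 1)) =
      ∑ i ∈ Finset.range n, (c (p i, p (i + 1)) + (v (p i) - v (p (i + 1)))) :=
    Finset.sum_congr rfl fun i _ => by rw [reducedCost]; ring
  rw [hsplit, Finset.sum_add_distrib, Finset.sum_range_sub' (fun i => v (p i))]
  ring

lemma sum_nonneg_of_loop {c : M × M → ℝ} {v : M → ℝ} (hv : ∀ z, 0 ≤ reducedCost c v z)
    {p : ℕ → M} {n : ℕ} (hp : p 0 = p n) : 0 ≤ ∑ i ∈ Finset.range n, c (p i, p (i + 1)) := by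
  have := sum_reducedCost c v p n
  rw [hp, add_sub_cancel_right] at this
  exact this ▸ Finset.sum_nonneg fun i _ => hv _

lemma minChainCost_self_nonneg {c : M × M → ℝ} {v : M → ℝ}
    (hv : ∀ z, 0 ≤ reducedCost c v z) (n : ℕ) (x : M) : 0 ≤ minChainCost c n x x := by
  refine le_csInf ⟨_, fun _ => x, rfl, rfl, rfl⟩ ?_
  rintro r ⟨p, hp0, hpn, rfl⟩
  exact sum_nonneg_of_loop hv (hp0.trans hpn.symm)

lemma minChainCost_self_le {c : M × M → ℝ} {v : M → ℝ}
    (hv : ∀ z, 0 ≤ reducedCost c v z) {n : ℕ} {x : M} {p : ℕ → M} (hp0 : p 0 = x) (hpn : p n = x) :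
    minChainCost c n x x ≤ ∑ i ∈ Finset.range n, reducedCost c v (p i, p (i + 1)) := by
  rw [sum_reducedCost, hp0, hpn, add_sub_cancel_right]
  refine csInf_le ⟨0, ?_⟩ ⟨p, hp0, hpn, rfl⟩
  rintro r ⟨p', hp0', hpn', rfl⟩
  exact sum_nonneg_of_loop hv (hp0'.trans hpn'.symm)

lemma exists_loop_sum_eq {f : M × M → ℝ} {q : ℕ → M} {k : ℕ}
    (hq : ∀ t < k + 2, f (q t, q (t + 1)) = 0) (x : M) :
    ∃ p : ℕ → M, p 0 = x ∧ p (k + 2) = x ∧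
      ∑ i ∈ Finset.range (k + 2), f (p i, p (i + 1)) = f (x, q 1) + f (q (k + 1), x) := by
  refine ⟨fun i => if i = 0 ∨ i = k + 2 then x else q i, by simp, by simp, ?_⟩
  rw [Finset.sum_range_succ', Finset.sum_range_succ, Finset.sum_eq_zero fun i hi => ?_]
  · rw [zero_add, add_comm]
    simp
  · rw [Finset.mem_range] at hi
    simpa [show i ≠ k + 1 by omega, show i ≠ k by omega] using hq (i + 1) (by omega)

lemma continuous_reducedCost [TopologicalSpace M] {c : M × M → ℝ} {v : M → ℝ} (hc : Continuous c)
    (hv : Continuous v) : Continuous (reducedCost c v) := by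
  unfold reducedCost
  fun_prop

lemma reducedCost_nonneg [TopologicalSpace M] [CompactSpace M] {c : M × M → ℝ} {v : M → ℝ}
    (hc : Continuous c) (hvc : Continuous v) (hv : ∀ x, v x = ⨅ y, v y + c (y, x))
    (z : M × M) : 0 ≤ reducedCost c v z := by
  have hbdd : BddBelow (Set.range fun y => v y + c (y, z.2)) :=
    (isCompact_range (by fun_prop)).bddBelow
  have := ciInf_le hbdd z.1
  rw [← hv] at this
  rw [reducedCost]
  linarith

lemma integral_reducedCost [TopologicalSpace M] [CompactSpace M] [MeasurableSpace M]
    [OpensMeasurableSpace M] [SecondCountableTopology M] {c : M × M → ℝ} {v : M → ℝ}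
    (hc : Continuous c) (hv : Continuous v) (μt : Measure (M × M)) [IsFiniteMeasure μt]
    (hclosed : μt.map Prod.fst = μt.map Prod.snd) :
    ∫ z, reducedCost c v z ∂μt = ∫ z, c z ∂μt := by
  have hint : ∀ {g : M × M → ℝ}, Continuous g → Integrable g μt := fun hg =>
    hg.integrable_of_hasCompactSupport (HasCompactSupport.of_compactSpace _)
  have hmarg : ∫ z, v z.1 ∂μt = ∫ z, v z.2 ∂μt := by
    rw [← integral_map measurable_fst.aemeasurable hv.aestronglyMeasurable, hclosed,
      integral_map measurable_snd.aemeasurable hv.aestronglyMeasurable]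
  have hv₁ : Integrable (fun z : M × M => v z.1) μt := hint (by fun_prop)
  have hv₂ : Integrable (fun z : M × M => v z.2) μt := hint (by fun_prop)
  simp only [reducedCost]
  rw [integral_sub (f := fun z => v z.1 + c z) (hv₁.add (hint hc)) hv₂,
    integral_add hv₁ (hint hc), hmarg]
  ring

theorem frequently_minChainCost_self_le [MetricSpace M] [CompactSpace M] [MeasurableSpace M]
    [BorelSpace M] {c : M × M → ℝ} {v : M → ℝ} (hv0 : ∀ z, 0 ≤ reducedCost c v z)
    (hvc : Continuous (reducedCost c v)) (μt : Measure (M × M)) [IsProbabilityMeasure μt]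
    (hclosed : μt.map Prod.fst = μt.map Prod.snd) (hcal : reducedCost c v =ᵐ[μt] 0) {x : M}
    (hx : ∀ U ∈ 𝓝 x, μt.map Prod.fst U ≠ 0) {ε : ℝ} (hε : 0 < ε) :
    ∃ᶠ n in atTop, minChainCost c n x x ≤ ε := by
  have : Nonempty M := ⟨x⟩
  obtain ⟨δ, hδ, hδf⟩ := Metric.uniformContinuous_iff.1
    (CompactSpace.uniformContinuous_of_continuous hvc) (ε / 2) (half_pos hε)
  have hnear : ∀ {a b : M × M}, dist a b < δ → reducedCost c v b = 0 →
      reducedCost c v a < ε / 2 := fun hab hb => by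
    have := hδf hab
    rw [hb, Real.dist_eq, sub_zero] at this
    exact (le_abs_self _).trans_lt this
  refine frequently_atTop.2 fun N => ?_
  obtain ⟨n, hn, q, hq0, hqn, hq⟩ := exists_chain_mem_of_measure_ne_zero μt hclosed
    (S := {z | reducedCost c v z = 0}) hcal Metric.isOpen_ball.measurableSet
    (hx _ (Metric.ball_mem_nhds x hδ)) (N + 2)
  obtain ⟨k, rfl⟩ : ∃ k, n = k + 2 := ⟨n - 2, by omega⟩
  obtain ⟨p, hp0, hpn, hsum⟩ := exists_loop_sum_eq hq x
  have hfirst : reducedCost c v (x, q 1) < ε / 2 := by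
    refine hnear ?_ (hq 0 (by omega))
    simpa [Prod.dist_eq, dist_comm] using hq0
  have hlast : reducedCost c v (q (k + 1), x) < ε / 2 := by
    refine hnear ?_ (hq (k + 1) (by omega))
    simpa [Prod.dist_eq, dist_comm] using hqn
  refine ⟨k + 2, by omega, (minChainCost_self_le hv0 hp0 hpn).trans ?_⟩
  rw [hsum]
  linarith

end ReducedCost

theorem support_projected_mather_subset_aubry_general
    {M : Type*} [MetricSpace M] [CompactSpace M]
    [MeasurableSpace M] [BorelSpace M]
    (c : M × M → ℝ) (hc : Continuous c)
    (hcrit : ∃ v : C(M, ℝ), ∀ x : M, v x = ⨅ y : M, (v y + c (y, x)))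
    (μt : Measure (M × M)) [IsProbabilityMeasure μt]
    (hclosed : μt.map Prod.fst = μt.map Prod.snd)
    (hMather : ∫ z, c z ∂μt = 0) :
    ∀ x : M, (∀ U ∈ 𝓝 x, (μt.map Prod.fst) U ≠ 0) → peierls c x x = 0 := by
  intro x hx
  obtain ⟨v, hv⟩ := hcrit
  have hv0 := reducedCost_nonneg hc v.continuous hv
  have hvc := continuous_reducedCost hc v.continuous
  have hcal : reducedCost c v =ᵐ[μt] 0 := by
    refine (integral_eq_zero_iff_of_nonneg hv0
      (hvc.integrable_of_hasCompactSupport (HasCompactSupport.of_compactSpace _))).1 ?_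
    rw [integral_reducedCost hc v.continuous μt hclosed, hMather]
  exact liminf_eq_zero_of_frequently_le (fun n => minChainCost_self_nonneg hv0 n x)
    fun ε hε => frequently_minChainCost_self_le hv0 hvc μt hclosed hcal hx hε

/-- The support of any projected Mather measure is contained in the projected Aubry
set `A = { y : h(y, y) = 0 }`: any point all of whose neighbourhoods have positive
measure belongs to `A`. -/
theorem support_projected_mather_subset_aubry
    {M : Type*} [MetricSpace M] [CompactSpace M] [Nonempty M]
    [MeasurableSpace M] [BorelSpace M]
    (c : M × M → ℝ) (hc : Continuous c)
    (hcrit : ∃ v : C(M, ℝ), ∀ x : M, v x = ⨅ y : M, (v y + c (y, x)))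
    (μt : Measure (M × M)) [IsProbabilityMeasure μt]
    (hclosed : μt.map Prod.fst = μt.map Prod.snd)
    (hMather : ∫ z, c z ∂μt = 0) :
    ∀ x : M, (∀ U ∈ 𝓝 x, (μt.map Prod.fst) U ≠ 0) → peierls c x x = 0 :=
  support_projected_mather_subset_aubry_general c hc hcrit μt hclosed hMather
end

section
/- Maximum principle: if v is a (possibly discontinuous, bounded below) subsolution of the critical equation and w is a continuous supersolution (w ≥ T(w)), and v ≤ w on the projected Aubry set A = {y : h(y,y)=0}, then v ≤ w on all of M. -/
/-!
Since `c` is continuous and `M` compact, the infimum defining `T(w)` is attained, so from `x` one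
can walk backwards along an orbit `x = ξ 0, ξ 1, …` calibrated by `w`:
`w (ξ (k + 1)) + c (ξ (k + 1), ξ k) ≤ w (ξ k)`. Let `z` be a cluster point of this orbit.
Closing a long stretch of the orbit between two visits near `z` into a loop at `z` produces loops of
arbitrarily small cost, while the subsolution `v` forces every loop to have non-negative cost;
hence `h (z, z) = 0` and `v z ≤ w z`. Along the orbit from a visit near `z` back to `x`, `v` grows
by at most the chain cost and `w` by at least it, so `v x - v z ≤ w x - w z`.
-/

open Filter

open Finset Function Topology

section Chains

variable {M : Type*} (c : M × M → ℝ)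

def chainCost (p : ℕ → M) (n : ℕ) : ℝ :=
  ∑ i ∈ range n, c (p i, p (i + 1))

def IsDominated (u : M → ℝ) : Prop :=
  ∀ x y, u y ≤ u x + c (x, y)

variable (w : M → ℝ) in
def IsCalibratedBackward (ξ : ℕ → M) : Prop :=
  ∀ k, w (ξ (k + 1)) + c (ξ (k + 1), ξ k) ≤ w (ξ k)

variable {c}

theorem chainCost_succ (p : ℕ → M) (n : ℕ) :
    chainCost c p (n + 1) = chainCost c p n + c (p n, p (n + 1)) :=
  sum_range_succ _ n

theorem chainCost_update_zero (p : ℕ → M) (n : ℕ) (z : M) :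
    chainCost c (update p 0 z) (n + 1) = chainCost c p (n + 1) - c (p 0, p 1) + c (z, p 1) := by
  simp only [chainCost, sum_range_succ' _ n, update_self, zero_add,
    update_of_ne (Nat.succ_ne_zero _)]
  ring

theorem chainCost_update_last (p : ℕ → M) (n : ℕ) (z : M) :
    chainCost c (update p (n + 1) z) (n + 1) =
      chainCost c p (n + 1) - c (p n, p (n + 1)) + c (p n, z) := by
  have hmid : ∑ i ∈ range n, c (update p (n + 1) z i, update p (n + 1) z (i + 1)) =
      ∑ i ∈ range n, c (p i, p (i + 1)) :=
    sum_congr rfl fun i hi => by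
      rw [mem_range] at hi
      rw [update_of_ne (by omega), update_of_ne (by omega)]
  simp only [chainCost, sum_range_succ _ n, hmid, update_self, update_of_ne n.succ_ne_self.symm]
  ring

theorem IsDominated.sub_le_chainCost {u : M → ℝ} (hu : IsDominated c u) (p : ℕ → M) (n : ℕ) :
    u (p n) - u (p 0) ≤ chainCost c p n := by
  induction n with
  | zero => simp [chainCost]
  | succ n ih => linarith [chainCost_succ (c := c) p n, hu (p n) (p (n + 1))]

theorem chainCost_le_sub {w : M → ℝ} {p : ℕ → M} {n : ℕ}
    (hp : ∀ m < n, w (p m) + c (p m, p (m + 1)) ≤ w (p (m + 1))) :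
    chainCost c p n ≤ w (p n) - w (p 0) := by
  induction n with
  | zero => simp [chainCost]
  | succ n ih =>
    linarith [chainCost_succ (c := c) p n, ih fun m hm => hp m (by omega), hp n n.lt_succ_self]

theorem IsCalibratedBackward.chainCost_reverse_le {w : M → ℝ} {ξ : ℕ → M}
    (hξ : IsCalibratedBackward c w ξ) {n b : ℕ} (hnb : n ≤ b) :
    chainCost c (fun m => ξ (b - m)) n ≤ w (ξ (b - n)) - w (ξ b) :=
  chainCost_le_sub fun m hm => by
    have := hξ (b - (m + 1))
    rwa [show b - (m + 1) + 1 = b - m by omega] at this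

theorem minChainCost_le_chainCost {u : M → ℝ} (hu : IsDominated c u) {p : ℕ → M} {n : ℕ}
    {x y : M} (h0 : p 0 = x) (hn : p n = y) : minChainCost c n x y ≤ chainCost c p n := by
  refine csInf_le ⟨u y - u x, ?_⟩ ⟨p, h0, hn, rfl⟩
  rintro r ⟨q, rfl, rfl, rfl⟩
  exact hu.sub_le_chainCost q n

theorem IsDominated.minChainCost_self_nonneg {u : M → ℝ} (hu : IsDominated c u) (n : ℕ) (x : M) :
    0 ≤ minChainCost c n x x := by
  refine le_csInf ⟨chainCost c (fun _ => x) n, fun _ => x, rfl, rfl, rfl⟩ ?_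
  rintro r ⟨q, hq0, hqn, rfl⟩
  have := hu.sub_le_chainCost q n
  rwa [hq0, hqn, sub_self] at this

theorem IsDominated.peierls_self_eq_zero {u : M → ℝ} (hu : IsDominated c u) {x : M}
    (hsmall : ∀ ε > 0, ∃ᶠ n in atTop, minChainCost c n x x ≤ ε) : peierls c x x = 0 := by
  have hnonneg : ∀ n, 0 ≤ minChainCost c n x x := fun n => hu.minChainCost_self_nonneg n x
  refine le_antisymm (le_of_forall_pos_le_add fun ε hε => ?_) ?_
  · rw [zero_add]
    exact liminf_le_of_frequently_le (hsmall ε hε) (isBoundedUnder_of ⟨0, hnonneg⟩)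
  · exact le_liminf_of_le (IsCoboundedUnder.of_frequently_le (hsmall 1 one_pos))
      (Eventually.of_forall hnonneg)

theorem isDominated_of_le_iInf {u : M → ℝ} (hu : BddBelow (Set.range u))
    (hc : BddBelow (Set.range c)) (h : ∀ y, u y ≤ ⨅ x, u x + c (x, y)) : IsDominated c u := by
  obtain ⟨bu, hbu⟩ := hu
  obtain ⟨bc, hbc⟩ := hc
  intro x y
  refine (h y).trans (ciInf_le ⟨bu + bc, ?_⟩ x)
  rintro r ⟨x', rfl⟩
  exact add_le_add (hbu ⟨x', rfl⟩) (hbc ⟨(x', y), rfl⟩)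

end Chains

theorem exists_add_le_of_iInf_le {M : Type*} [TopologicalSpace M] [CompactSpace M]
    {c : M × M → ℝ} {w : M → ℝ} (hw : Continuous w) (hc : Continuous c) {y : M}
    (h : ⨅ x, w x + c (x, y) ≤ w y) : ∃ x, w x + c (x, y) ≤ w y := by
  have : Nonempty M := ⟨y⟩
  obtain ⟨x, -, hx⟩ := isCompact_univ.exists_isMinOn ⟨y, Set.mem_univ y⟩
    (hw.add (hc.comp (continuous_id.prodMk continuous_const))).continuousOn
  exact ⟨x, (le_ciInf fun x' => isMinOn_univ_iff.1 hx x').trans h⟩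

section ClusterPoint

variable {M : Type*} [PseudoMetricSpace M] {c : M × M → ℝ} {u w : M → ℝ} {ξ : ℕ → M} {z : M}

theorem UniformContinuous.eventually_forall_le_add (hc : UniformContinuous c) (z : M) {ε : ℝ}
    (hε : 0 < ε) : ∀ᶠ y in 𝓝 z, ∀ a, c (z, a) ≤ c (y, a) + ε ∧ c (a, z) ≤ c (a, y) + ε := by
  obtain ⟨δ, hδ, hcδ⟩ := Metric.uniformContinuous_iff.1 hc ε hε
  filter_upwards [Metric.ball_mem_nhds z hδ] with y hy a
  have hleft : dist (z, a) (y, a) < δ := by simpa [Prod.dist_eq, dist_comm] using hy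
  have hright : dist (a, z) (a, y) < δ := by simpa [Prod.dist_eq, dist_comm] using hy
  exact ⟨by linarith [(abs_lt.1 (hcδ hleft)).2], by linarith [(abs_lt.1 (hcδ hright)).2]⟩

theorem MapClusterPt.frequently_near (hz : MapClusterPt z atTop ξ) (hc : UniformContinuous c)
    (hw : ContinuousAt w z) {ε : ℝ} (hε : 0 < ε) :
    ∃ᶠ k in atTop, (∀ a, c (z, a) ≤ c (ξ k, a) + ε ∧ c (a, z) ≤ c (a, ξ k) + ε) ∧
      |w (ξ k) - w z| < ε :=
  hz.frequently (p := fun y => (∀ a, c (z, a) ≤ c (y, a) + ε ∧ c (a, z) ≤ c (a, y) + ε) ∧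
    |w y - w z| < ε) ((hc.eventually_forall_le_add z hε).and
      (hw.eventually (eventually_abs_sub_lt _ hε)))

theorem IsCalibratedBackward.peierls_self_eq_zero_of_mapClusterPt
    (hξ : IsCalibratedBackward c w ξ) (hz : MapClusterPt z atTop ξ) (hc : UniformContinuous c)
    (hw : ContinuousAt w z) (hu : IsDominated c u) : peierls c z z = 0 := by
  refine hu.peierls_self_eq_zero fun ε hε => frequently_atTop.2 fun N => ?_
  have hnear := hz.frequently_near hc hw (ε := ε / 4) (by positivity)
  obtain ⟨a, -, hca, hwa⟩ := frequently_atTop.1 hnear 0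
  obtain ⟨b, hb, hcb, hwb⟩ := frequently_atTop.1 hnear (a + N + 2)
  obtain ⟨k, rfl⟩ : ∃ k, b = a + (k + 1) := ⟨b - a - 1, by omega⟩
  set p : ℕ → M := fun m => ξ (a + (k + 1) - m) with hp
  have hp0 : p 0 = ξ (a + (k + 1)) := rfl
  have hpk : p k = ξ (a + 1) := by simp only [hp]; congr 1; omega
  have hplast : p (k + 1) = ξ a := by simp [hp]
  -- the calibrated chain from `ξ b` down to `ξ a`, with both endpoints moved to `z`
  have hloop : minChainCost c (k + 1) z z ≤ chainCost c (update (update p (k + 1) z) 0 z) (k + 1) :=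
    minChainCost_le_chainCost hu (by simp) (by simp)
  rw [chainCost_update_zero, chainCost_update_last, update_of_ne (by omega : 0 ≠ k + 1),
    update_of_ne (by omega : 1 ≠ k + 1), hpk, hplast, hp0] at hloop
  have hcal : chainCost c p (k + 1) ≤ w (ξ a) - w (ξ (a + (k + 1))) := by
    simpa only [Nat.add_sub_cancel] using hξ.chainCost_reverse_le (Nat.le_add_left (k + 1) a)
  have hfirst := (hcb (p 1)).1
  have hlast := (hca (ξ (a + 1))).2
  refine ⟨k + 1, by omega, ?_⟩
  linarith [abs_lt.1 hwa, abs_lt.1 hwb]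

theorem IsCalibratedBackward.sub_le_sub_of_mapClusterPt
    (hξ : IsCalibratedBackward c w ξ) (hz : MapClusterPt z atTop ξ) (hc : UniformContinuous c)
    (hw : ContinuousAt w z) (hu : IsDominated c u) : u (ξ 0) - u z ≤ w (ξ 0) - w z := by
  refine le_of_forall_pos_le_add fun ε hε => ?_
  obtain ⟨a, ha, hca, hwa⟩ := frequently_atTop.1 (hz.frequently_near hc hw (half_pos hε)) 1
  obtain ⟨k, rfl⟩ : ∃ k, a = k + 1 := ⟨a - 1, by omega⟩
  set p : ℕ → M := fun m => ξ (k + 1 - m) with hp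
  have hp0 : p 0 = ξ (k + 1) := rfl
  have hplast : p (k + 1) = ξ 0 := by simp [hp]
  have hdom := hu.sub_le_chainCost (update p 0 z) (k + 1)
  rw [chainCost_update_zero, update_self, update_of_ne k.succ_ne_zero, hplast, hp0] at hdom
  have hcal : chainCost c p (k + 1) ≤ w (ξ 0) - w (ξ (k + 1)) := by
    simpa only [Nat.sub_self] using hξ.chainCost_reverse_le le_rfl
  linarith [(hca (p 1)).1, abs_lt.1 hwa]

end ClusterPoint

theorem maximum_principle_general
    {M : Type*} [MetricSpace M] [CompactSpace M]
    (c : M × M → ℝ) (hc : Continuous c)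
    (v : M → ℝ) (hvb : BddBelow (Set.range v))
    (hv : ∀ x : M, v x ≤ ⨅ y : M, (v y + c (y, x)))
    (w : C(M, ℝ)) (hw : ∀ x : M, w x ≥ ⨅ y : M, (w y + c (y, x)))
    (hvw : ∀ y : M, peierls c y y = 0 → v y ≤ w y) :
    ∀ x : M, v x ≤ w x := by
  intro x
  have hvdom : IsDominated c v := isDominated_of_le_iInf hvb (isCompact_range hc).bddBelow hv
  choose F hF using fun y => exists_add_le_of_iInf_le w.continuous hc (hw y)
  have hξ : IsCalibratedBackward c w (fun k => F^[k] x) := fun k => by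
    simpa only [Function.iterate_succ_apply'] using hF (F^[k] x)
  obtain ⟨z, -, hz⟩ := isCompact_univ.exists_mapClusterPt (f := atTop)
    (u := fun k => F^[k] x) (by simp)
  have hcu := CompactSpace.uniformContinuous_of_continuous hc
  have hzA := hvw z (hξ.peierls_self_eq_zero_of_mapClusterPt hz hcu w.continuous.continuousAt hvdom)
  have hxz := hξ.sub_le_sub_of_mapClusterPt hz hcu w.continuous.continuousAt hvdom
  simp only [Function.iterate_zero_apply] at hxz
  linarith

/-- Maximum principle: if `v` is a (possibly discontinuous, bounded below) subsolution
and `w` a continuous supersolution of the critical equation (critical value `0`), and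
`v ≤ w` on the projected Aubry set `A = {y : h(y,y) = 0}`, then `v ≤ w` on `M`. -/
theorem maximum_principle
    {M : Type*} [MetricSpace M] [CompactSpace M] [Nonempty M]
    (c : M × M → ℝ) (hc : Continuous c)
    (hcrit : ∃ v : C(M, ℝ), ∀ x : M, v x = ⨅ y : M, (v y + c (y, x)))
    (v : M → ℝ) (hvb : BddBelow (Set.range v))
    (hv : ∀ x : M, v x ≤ ⨅ y : M, (v y + c (y, x)))
    (w : C(M, ℝ)) (hw : ∀ x : M, w x ≥ ⨅ y : M, (w y + c (y, x)))
    (hvw : ∀ y : M, peierls c y y = 0 → v y ≤ w y) :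
    ∀ x : M, v x ≤ w x :=
  maximum_principle_general c hc v hvb hv w hw hvw
end
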